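/- arXiv:1708.07078 — 4 statements merged into one kernel-verified Lean document; each statement's English description precedes it below -/
import Mathlib

section
/- Let ℓ and m be axiomatic length functions on a group G. Then the pointwise sum ℓ + m is an axiomatic length function on G if and only if ℓ and m have compatible combinatorics and are coherently oriented. -/
/-- An axiomatic length function on a group `G` (Culler–Morgan / Parry axioms I–VI). -/
def IsLengthFunction {G : Type*} [Group G] (ℓ : G → ℝ) : Prop :=
  (∀ g : G, 0 ≤ ℓ g) ∧
  -- (I)
  ℓ 1 = 0 ∧
  -- (II)
  (∀ g : G, ℓ g = ℓ g⁻¹) ∧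
  -- (III)
  (∀ g h : G, ℓ (h * g * h⁻¹) = ℓ g) ∧
  -- (IV)
  (∀ g h : G, ℓ (g * h) = ℓ (g * h⁻¹) ∨
    max (ℓ (g * h)) (ℓ (g * h⁻¹)) ≤ ℓ g + ℓ h) ∧
  -- (V)
  (∀ g h : G, 0 < ℓ g → 0 < ℓ h →
    (ℓ (g * h) = ℓ (g * h⁻¹) ∧ ℓ g + ℓ h < ℓ (g * h)) ∨
    max (ℓ (g * h)) (ℓ (g * h⁻¹)) = ℓ g + ℓ h) ∧
  -- (VI)
  (∃ g h : G, 0 < ℓ g + ℓ h - ℓ (g * h⁻¹) ∧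
    ℓ g + ℓ h - ℓ (g * h⁻¹) < 2 * min (ℓ g) (ℓ h))

/-- The overlap set `O^ℓ`: pairs of distinct elements with `ℓ(gh) ≠ ℓ(gh⁻¹)`. -/
def OverlapSet {G : Type*} [Group G] (ℓ : G → ℝ) : Set (G × G) :=
  {p : G × G | p.1 ≠ p.2 ∧ ℓ (p.1 * p.2) ≠ ℓ (p.1 * p.2⁻¹)}

/-- The disjoint set `D^ℓ`: pairs of distinct elements with
`ℓ(gh) = ℓ(gh⁻¹) > ℓ(g) + ℓ(h)`. -/
def DisjointSet {G : Type*} [Group G] (ℓ : G → ℝ) : Set (G × G) :=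
  {p : G × G | p.1 ≠ p.2 ∧ ℓ (p.1 * p.2) = ℓ (p.1 * p.2⁻¹) ∧
    ℓ p.1 + ℓ p.2 < ℓ (p.1 * p.2)}

/-- `ℓ` and `m` have compatible combinatorics if `O^ℓ ∩ D^m = ∅ = D^ℓ ∩ O^m`. -/
def CompatibleCombinatorics {G : Type*} [Group G] (ℓ m : G → ℝ) : Prop :=
  OverlapSet ℓ ∩ DisjointSet m = ∅ ∧ DisjointSet ℓ ∩ OverlapSet m = ∅

/-- `ℓ` and `m` are coherently oriented if on `O^ℓ ∩ O^m` the strict inequalities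
`ℓ(gh⁻¹) < ℓ(gh)` and `m(gh⁻¹) < m(gh)` are equivalent. -/
def CoherentlyOriented {G : Type*} [Group G] (ℓ m : G → ℝ) : Prop :=
  ∀ p ∈ OverlapSet ℓ ∩ OverlapSet m,
    (ℓ (p.1 * p.2⁻¹) < ℓ (p.1 * p.2) ↔ m (p.1 * p.2⁻¹) < m (p.1 * p.2))

/-- `(g,h)` is a good pair for `ℓ` if `0 < ℓ(g)+ℓ(h)−ℓ(gh⁻¹) < 2·min{ℓ(g),ℓ(h)}`. -/
def GoodPair {G : Type*} [Group G] (ℓ : G → ℝ) (g h : G) : Prop :=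
  0 < ℓ g + ℓ h - ℓ (g * h⁻¹) ∧
  ℓ g + ℓ h - ℓ (g * h⁻¹) < 2 * min (ℓ g) (ℓ h)

/-!
Write `s = ℓ + m`. By (IV), at a pair `(g, h)` either `ℓ(gh) = ℓ(gh⁻¹)` or both values are at
most `ℓ g + ℓ h`; by (V), for positive lengths the larger one is at least `ℓ g + ℓ h`.
Compatibility makes the upper bound of (IV) hold for `ℓ` and `m` simultaneously as soon as one of
them overlaps at `(g, h)`, and coherent orientation makes the maximum additive,
`max (s(gh)) (s(gh⁻¹)) = max (ℓ(gh)) (ℓ(gh⁻¹)) + max (m(gh)) (m(gh⁻¹))`, which gives (IV) and (V)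
for `s`, provided the lower bound of (V) holds for `ℓ` and `m` whenever `s g, s h > 0`. It can
only fail for `ℓ` when, say, `ℓ g = 0` and `ℓ(gh), ℓ(gh⁻¹) < ℓ h`; then the pairs `(g, g h^{±1})`
are `ℓ`-disjoint, and compatibility forces `m g = 0`. A good pair for `ℓ` remains good for `s`,
since compatibility yields the triangle inequalities for `m` at it.

Conversely, a pair violating compatibility or orientation is moved, through `(gh, gh⁻¹)` and
`(g²h⁻¹, gh)` respectively when `g` has length zero, to a pair at which `s` violates (IV) or (V).
-/

theorem max_add_add_eq_max_add_max {α : Type*} [Add α] [LinearOrder α] [AddLeftMono α]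
    [AddRightMono α] {a b c d : α} (h : a ≤ b ∧ c ≤ d ∨ b ≤ a ∧ d ≤ c) :
    max (a + c) (b + d) = max a b + max c d := by
  rcases h with ⟨hab, hcd⟩ | ⟨hba, hdc⟩
  · rw [max_eq_right hab, max_eq_right hcd, max_eq_right (add_le_add hab hcd)]
  · rw [max_eq_left hba, max_eq_left hdc, max_eq_left (add_le_add hba hdc)]

namespace IsLengthFunction

variable {G : Type*} [Group G] {ℓ : G → ℝ}

theorem nonneg (hℓ : IsLengthFunction ℓ) (g : G) : 0 ≤ ℓ g := hℓ.1 g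

theorem map_one (hℓ : IsLengthFunction ℓ) : ℓ 1 = 0 := hℓ.2.1

theorem map_inv (hℓ : IsLengthFunction ℓ) (g : G) : ℓ g⁻¹ = ℓ g := (hℓ.2.2.1 g).symm

theorem map_conj (hℓ : IsLengthFunction ℓ) (g k : G) : ℓ (k * g * k⁻¹) = ℓ g :=
  hℓ.2.2.2.1 g k

theorem eq_or_max_le (hℓ : IsLengthFunction ℓ) (g h : G) :
    ℓ (g * h) = ℓ (g * h⁻¹) ∨ max (ℓ (g * h)) (ℓ (g * h⁻¹)) ≤ ℓ g + ℓ h :=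
  hℓ.2.2.2.2.1 g h

theorem exists_goodPair (hℓ : IsLengthFunction ℓ) : ∃ g h : G, GoodPair ℓ g h :=
  hℓ.2.2.2.2.2.2

theorem map_mul_comm (hℓ : IsLengthFunction ℓ) (g h : G) : ℓ (g * h) = ℓ (h * g) := by
  simpa using (hℓ.map_conj (g * h) g⁻¹).symm

theorem map_mul_inv_comm (hℓ : IsLengthFunction ℓ) (g h : G) : ℓ (h * g⁻¹) = ℓ (g * h⁻¹) := by
  rw [← hℓ.map_inv, mul_inv_rev, inv_inv]

theorem max_le_of_ne (hℓ : IsLengthFunction ℓ) {g h : G} (hne : ℓ (g * h) ≠ ℓ (g * h⁻¹)) :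
    max (ℓ (g * h)) (ℓ (g * h⁻¹)) ≤ ℓ g + ℓ h :=
  (hℓ.eq_or_max_le g h).resolve_left hne

theorem eq_of_add_lt_max (hℓ : IsLengthFunction ℓ) {g h : G}
    (hlt : ℓ g + ℓ h < max (ℓ (g * h)) (ℓ (g * h⁻¹))) : ℓ (g * h) = ℓ (g * h⁻¹) :=
  (hℓ.eq_or_max_le g h).resolve_right hlt.not_ge

theorem map_mul_le_of_map_mul_inv_le (hℓ : IsLengthFunction ℓ) {g h : G}
    (hle : ℓ (g * h⁻¹) ≤ ℓ g + ℓ h) : ℓ (g * h) ≤ ℓ g + ℓ h := by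
  rcases hℓ.eq_or_max_le g h with heq | hmax
  · exact heq ▸ hle
  · exact (le_max_left _ _).trans hmax

theorem add_le_max (hℓ : IsLengthFunction ℓ) {g h : G} (hg : 0 < ℓ g) (hh : 0 < ℓ h) :
    ℓ g + ℓ h ≤ max (ℓ (g * h)) (ℓ (g * h⁻¹)) := by
  rcases hℓ.2.2.2.2.2.1 g h hg hh with ⟨-, hlt⟩ | hmax
  · exact hlt.le.trans (le_max_left _ _)
  · exact hmax.ge

theorem map_mul_eq_add_of_map_mul_inv_lt (hℓ : IsLengthFunction ℓ) {g h : G} (hg : 0 < ℓ g)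
    (hh : 0 < ℓ h) (hlt : ℓ (g * h⁻¹) < ℓ g + ℓ h) : ℓ (g * h) = ℓ g + ℓ h := by
  have hge : ℓ g + ℓ h ≤ ℓ (g * h) :=
    (le_max_iff.mp (hℓ.add_le_max hg hh)).resolve_right hlt.not_ge
  exact le_antisymm (hℓ.map_mul_le_of_map_mul_inv_le hlt.le) hge

theorem map_mul_self (hℓ : IsLengthFunction ℓ) (g : G) : ℓ (g * g) = 2 * ℓ g := by
  have h1 : ℓ (g * g⁻¹) = 0 := by rw [mul_inv_cancel, hℓ.map_one]
  rcases (hℓ.nonneg g).eq_or_lt with hg | hg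
  · have := hℓ.map_mul_le_of_map_mul_inv_le (h1.trans_le (by linarith))
    linarith [hℓ.nonneg (g * g)]
  · rw [hℓ.map_mul_eq_add_of_map_mul_inv_lt hg hg (by linarith)]
    ring

theorem map_mul_inv_mul_left (hℓ : IsLengthFunction ℓ) (g k : G) : ℓ (g * (g * k)⁻¹) = ℓ k := by
  rw [mul_inv_rev, ← mul_assoc, hℓ.map_conj, hℓ.map_inv]

theorem map_mul_mul_mul_inv_inv (hℓ : IsLengthFunction ℓ) (g h : G) :
    ℓ (g * h * (g * h⁻¹)⁻¹) = 2 * ℓ h := by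
  rw [show g * h * (g * h⁻¹)⁻¹ = g * (h * h) * g⁻¹ by group, hℓ.map_conj, hℓ.map_mul_self]

theorem map_mul_mul_eq_of_eq_zero (hℓ : IsLengthFunction ℓ) {g k : G} (hg : ℓ g = 0)
    (hlt : ℓ (g * k) < ℓ k) : ℓ (g * (g * k)) = ℓ k := by
  have hconj : ℓ (k⁻¹ * g⁻¹ * k) = 0 := by
    simpa [hℓ.map_inv, hg] using hℓ.map_conj g⁻¹ k⁻¹
  have hk : g * k * (k⁻¹ * g⁻¹ * k) = k := by group
  have hlt' : ℓ (g * k) + ℓ (k⁻¹ * g⁻¹ * k) <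
      max (ℓ (g * k * (k⁻¹ * g⁻¹ * k))) (ℓ (g * k * (k⁻¹ * g⁻¹ * k)⁻¹)) := by
    rw [hconj, hk, add_zero]
    exact lt_max_of_lt_left hlt
  rw [← hk, hℓ.eq_of_add_lt_max hlt']
  congr 1
  group

theorem mem_disjointSet_iff (hℓ : IsLengthFunction ℓ) {g h : G} :
    (g, h) ∈ DisjointSet ℓ ↔ ℓ (g * h) = ℓ (g * h⁻¹) ∧ ℓ g + ℓ h < ℓ (g * h) := by
  refine ⟨fun hD => hD.2, fun ⟨heq, hlt⟩ => ⟨?_, heq, hlt⟩⟩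
  intro hgh
  dsimp only at hgh
  subst hgh
  rw [mul_inv_cancel, hℓ.map_one] at heq
  linarith [hℓ.nonneg g]

theorem mem_disjointSet_of_eq_zero (hℓ : IsLengthFunction ℓ) {g k : G} (hg : ℓ g = 0)
    (hlt : ℓ (g * k) < ℓ k) : (g, g * k) ∈ DisjointSet ℓ := by
  rw [hℓ.mem_disjointSet_iff, hℓ.map_mul_mul_eq_of_eq_zero hg hlt, hℓ.map_mul_inv_mul_left, hg,
    zero_add]
  exact ⟨rfl, hlt⟩

end IsLengthFunction

theorem GoodPair.symm {G : Type*} [Group G] {ℓ : G → ℝ} (hℓ : IsLengthFunction ℓ) {g h : G}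
    (hgh : GoodPair ℓ g h) : GoodPair ℓ h g := by
  unfold GoodPair at *
  rw [hℓ.map_mul_inv_comm, add_comm, min_comm]
  exact hgh

namespace CompatibleCombinatorics

variable {G : Type*} [Group G] {ℓ m : G → ℝ}

theorem symm (hc : CompatibleCombinatorics ℓ m) : CompatibleCombinatorics m ℓ :=
  ⟨by rw [Set.inter_comm]; exact hc.2, by rw [Set.inter_comm]; exact hc.1⟩

theorem max_le_add_of_ne (hc : CompatibleCombinatorics ℓ m) (hm : IsLengthFunction m) {g h : G}
    (hne : ℓ (g * h) ≠ ℓ (g * h⁻¹)) : max (m (g * h)) (m (g * h⁻¹)) ≤ m g + m h := by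
  refine (hm.eq_or_max_le g h).elim (fun heq => ?_) id
  rw [← heq, max_self]
  by_contra! hlt
  have hD := hm.mem_disjointSet_iff.2 ⟨heq, hlt⟩
  exact (Set.eq_empty_iff_forall_notMem.1 hc.1 (g, h)) ⟨⟨hD.1, hne⟩, hD⟩

theorem eq_of_mem_disjointSet (hc : CompatibleCombinatorics ℓ m) {g h : G}
    (hD : (g, h) ∈ DisjointSet ℓ) : m (g * h) = m (g * h⁻¹) := by
  by_contra hne
  exact (Set.eq_empty_iff_forall_notMem.1 hc.2 (g, h)) ⟨hD, hD.1, hne⟩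

theorem eq_zero_of_map_mul_lt (hc : CompatibleCombinatorics ℓ m) (hℓ : IsLengthFunction ℓ)
    (hm : IsLengthFunction m) {g h : G} (hg : ℓ g = 0) (hlt : ℓ (g * h) < ℓ h)
    (hlt' : ℓ (g * h⁻¹) < ℓ h) : m g = 0 := by
  have hm₁ : m (g * (g * h)) = m h := by
    rw [hc.eq_of_mem_disjointSet (hℓ.mem_disjointSet_of_eq_zero hg hlt), hm.map_mul_inv_mul_left]
  have hm₂ : m (g * (g * h⁻¹)) = m h := by
    rw [← hℓ.map_inv h] at hlt'
    rw [hc.eq_of_mem_disjointSet (hℓ.mem_disjointSet_of_eq_zero hg hlt'),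
      hm.map_mul_inv_mul_left, hm.map_inv]
  have hℓh : 0 < ℓ h := (hℓ.nonneg _).trans_lt hlt
  by_contra hmg
  have hmg : 0 < m g := (hm.nonneg g).lt_of_ne' hmg
  rcases (hm.nonneg h).eq_or_lt with hmh | hmh
  · -- `(h, h g²)` is disjoint for `m` but overlapping for `ℓ`
    have hmhgg : m (h * (g * g)) < m (g * g) := by
      rw [hm.map_mul_comm, mul_assoc, hm₁, ← hmh, hm.map_mul_self]
      linarith
    have hD := (hm.mem_disjointSet_of_eq_zero hmh.symm hmhgg).2
    have hℓhh : ℓ (h * (h * (g * g))) = 2 * ℓ h := by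
      have hlt'' : ℓ (g * (g * h) * h⁻¹) < ℓ (g * (g * h)) + ℓ h := by
        rw [show g * (g * h) * h⁻¹ = g * g by group, hℓ.map_mul_self, hg,
          hℓ.map_mul_mul_eq_of_eq_zero hg hlt]
        linarith
      rw [show h * (h * (g * g)) = h * h * (g * (g * h) * h) * (h * h)⁻¹ by group, hℓ.map_conj,
        hℓ.map_mul_eq_add_of_map_mul_inv_lt (by rwa [hℓ.map_mul_mul_eq_of_eq_zero hg hlt]) hℓh
          hlt'', hℓ.map_mul_mul_eq_of_eq_zero hg hlt]
      ring
    have hne : ℓ (h * (h * (g * g))) ≠ ℓ (h * (h * (g * g))⁻¹) := by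
      rw [hℓhh, hℓ.map_mul_inv_mul_left, hℓ.map_mul_self, hg]
      exact ne_of_gt (by linarith)
    have hbound := hc.max_le_add_of_ne hm hne
    rw [← hD.1, max_self] at hbound
    linarith [hD.2]
  · have hV := hm.add_le_max (g := g * g) (h := h) (by rw [hm.map_mul_self]; linarith) hmh
    rw [mul_assoc, mul_assoc, hm₁, hm₂, max_self, hm.map_mul_self] at hV
    linarith

theorem add_le_max (hc : CompatibleCombinatorics ℓ m) (hℓ : IsLengthFunction ℓ)
    (hm : IsLengthFunction m) {g h : G} (hg : 0 < ℓ g + m g) (hh : 0 < ℓ h + m h) :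
    ℓ g + ℓ h ≤ max (ℓ (g * h)) (ℓ (g * h⁻¹)) := by
  by_contra! hlt
  rw [max_lt_iff] at hlt
  rcases (hℓ.nonneg g).eq_or_lt with hℓg | hℓg
  · have := hc.eq_zero_of_map_mul_lt hℓ hm (h := h) hℓg.symm (by linarith) (by linarith)
    linarith
  rcases (hℓ.nonneg h).eq_or_lt with hℓh | hℓh
  · have := hc.eq_zero_of_map_mul_lt hℓ hm (g := h) (h := g) hℓh.symm
      (by rw [← hℓ.map_mul_comm]; linarith) (by rw [hℓ.map_mul_inv_comm]; linarith)
    linarith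
  exact (hℓ.add_le_max hℓg hℓh).not_gt (max_lt hlt.1 hlt.2)

theorem max_le_add_of_ne_or_ne (hc : CompatibleCombinatorics ℓ m) (hℓ : IsLengthFunction ℓ)
    (hm : IsLengthFunction m) {g h : G}
    (hne : ℓ (g * h) ≠ ℓ (g * h⁻¹) ∨ m (g * h) ≠ m (g * h⁻¹)) :
    max (ℓ (g * h)) (ℓ (g * h⁻¹)) ≤ ℓ g + ℓ h ∧ max (m (g * h)) (m (g * h⁻¹)) ≤ m g + m h := by
  rcases hne with hne | hne
  · exact ⟨hℓ.max_le_of_ne hne, hc.max_le_add_of_ne hm hne⟩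
  · exact ⟨hc.symm.max_le_add_of_ne hℓ hne, hm.max_le_of_ne hne⟩

theorem map_le_map_mul_inv_add (hc : CompatibleCombinatorics ℓ m) (hℓ : IsLengthFunction ℓ)
    (hm : IsLengthFunction m) {g h : G} (hgh : GoodPair ℓ g h) : m g ≤ m (g * h⁻¹) + m h := by
  obtain ⟨hpos, hlt⟩ := hgh
  rw [mul_min_of_nonneg _ _ zero_le_two, lt_min_iff] at hlt
  have hsum : ℓ (g * h⁻¹ * h⁻¹) = ℓ (g * h⁻¹) + ℓ h := by
    have := hℓ.map_mul_eq_add_of_map_mul_inv_lt (g := g * h⁻¹) (h := h⁻¹)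
      (by linarith [hℓ.nonneg h]) (by rw [hℓ.map_inv]; linarith [hℓ.nonneg g])
      (by rw [inv_inv, inv_mul_cancel_right, hℓ.map_inv]; linarith)
    rwa [hℓ.map_inv] at this
  have hne : ℓ (g * h⁻¹ * h⁻¹) ≠ ℓ (g * h⁻¹ * h⁻¹⁻¹) := by
    rw [hsum, inv_inv, inv_mul_cancel_right]
    exact ne_of_gt (by linarith)
  have := (le_max_right _ _).trans (hc.max_le_add_of_ne hm hne)
  rwa [inv_inv, inv_mul_cancel_right, hm.map_inv] at this

theorem goodPair_add (hc : CompatibleCombinatorics ℓ m) (hℓ : IsLengthFunction ℓ)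
    (hm : IsLengthFunction m) {g h : G} (hgh : GoodPair ℓ g h) :
    GoodPair (fun x => ℓ x + m x) g h := by
  have hg := hc.map_le_map_mul_inv_add hℓ hm hgh
  have hh := hc.map_le_map_mul_inv_add hℓ hm (hgh.symm hℓ)
  rw [hm.map_mul_inv_comm] at hh
  obtain ⟨hpos, hlt⟩ := hgh
  rw [mul_min_of_nonneg _ _ zero_le_two, lt_min_iff] at hlt
  have hℓgh : ℓ (g * h⁻¹) < ℓ (g * h) := by
    rw [hℓ.map_mul_eq_add_of_map_mul_inv_lt (h := h) (by linarith [hℓ.nonneg h])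
      (by linarith [hℓ.nonneg g]) (by linarith)]
    linarith
  have hmgh := (le_max_right _ _).trans (hc.max_le_add_of_ne hm hℓgh.ne')
  refine ⟨by linarith, ?_⟩
  rw [mul_min_of_nonneg _ _ zero_le_two, lt_min_iff]
  constructor <;> linarith

end CompatibleCombinatorics

theorem CoherentlyOriented.le_and_le_or_le_and_le {G : Type*} [Group G] {ℓ m : G → ℝ}
    (hco : CoherentlyOriented ℓ m) (hℓ : IsLengthFunction ℓ) (hm : IsLengthFunction m) (g h : G) :
    ℓ (g * h) ≤ ℓ (g * h⁻¹) ∧ m (g * h) ≤ m (g * h⁻¹) ∨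
      ℓ (g * h⁻¹) ≤ ℓ (g * h) ∧ m (g * h⁻¹) ≤ m (g * h) := by
  by_cases hgh : g = h
  · subst hgh
    rw [mul_inv_cancel, hℓ.map_one, hm.map_one]
    exact Or.inr ⟨hℓ.nonneg _, hm.nonneg _⟩
  rcases eq_or_ne (ℓ (g * h)) (ℓ (g * h⁻¹)) with hℓe | hℓne
  · simpa [hℓe] using le_total (m (g * h)) (m (g * h⁻¹))
  rcases eq_or_ne (m (g * h)) (m (g * h⁻¹)) with hme | hmne
  · simpa [hme] using le_total (ℓ (g * h)) (ℓ (g * h⁻¹))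
  have hiff := hco (g, h) ⟨⟨hgh, hℓne⟩, ⟨hgh, hmne⟩⟩
  rcases hℓne.lt_or_gt with hlt | hlt
  · exact Or.inl ⟨hlt.le, not_lt.mp fun hm₁ => hlt.not_gt (hiff.mpr hm₁)⟩
  · exact Or.inr ⟨hlt.le, (hiff.mp hlt).le⟩

theorem CompatibleCombinatorics.isLengthFunction_add {G : Type*} [Group G] {ℓ m : G → ℝ}
    (hc : CompatibleCombinatorics ℓ m) (hco : CoherentlyOriented ℓ m) (hℓ : IsLengthFunction ℓ)
    (hm : IsLengthFunction m) : IsLengthFunction (fun g => ℓ g + m g) := by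
  refine ⟨fun g => add_nonneg (hℓ.nonneg g) (hm.nonneg g), by simp [hℓ.map_one, hm.map_one],
    fun g => by simp [hℓ.map_inv, hm.map_inv], fun g k => by simp [hℓ.map_conj, hm.map_conj],
    fun g h => ?_, fun g h hg hh => ?_, ?_⟩
  · beta_reduce
    by_cases heq : ℓ (g * h) = ℓ (g * h⁻¹) ∧ m (g * h) = m (g * h⁻¹)
    · exact Or.inl (by rw [heq.1, heq.2])
    · obtain ⟨hℓ₁, hm₁⟩ := hc.max_le_add_of_ne_or_ne hℓ hm (not_and_or.mp heq)
      refine Or.inr (max_add_add_le_max_add_max.trans ?_)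
      linarith
  · beta_reduce at hg hh ⊢
    have hℓ₁ := hc.add_le_max hℓ hm hg hh
    have hm₁ := hc.symm.add_le_max hm hℓ (g := g) (h := h) (by linarith) (by linarith)
    by_cases heq : ℓ (g * h) = ℓ (g * h⁻¹) ∧ m (g * h) = m (g * h⁻¹)
    · obtain ⟨hℓe, hme⟩ := heq
      rw [hℓe, max_self] at hℓ₁
      rw [hme, max_self] at hm₁
      rw [hℓe, hme, max_self]
      rcases (add_le_add hℓ₁ hm₁).eq_or_lt with hsum | hsum
      · exact Or.inr (by linarith)
      · exact Or.inl ⟨rfl, by linarith⟩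
    · obtain ⟨hℓ₂, hm₂⟩ := hc.max_le_add_of_ne_or_ne hℓ hm (not_and_or.mp heq)
      refine Or.inr ?_
      rw [max_add_add_eq_max_add_max (hco.le_and_le_or_le_and_le hℓ hm g h)]
      linarith
  · obtain ⟨g, h, hgh⟩ := hℓ.exists_goodPair
    exact ⟨g, h, hc.goodPair_add hℓ hm hgh⟩

namespace IsLengthFunction

variable {G : Type*} [Group G] {ℓ m : G → ℝ}

theorem map_mul_le_add_of_add_of_eq_zero (hℓ : IsLengthFunction ℓ) (hm : IsLengthFunction m)
    (hs : IsLengthFunction (fun x => ℓ x + m x)) {g h : G} (hg : ℓ g = 0)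
    (hne : ℓ (g * h) ≠ ℓ (g * h⁻¹)) (heq : m (g * h) = m (g * h⁻¹)) :
    m (g * h) ≤ m g + m h := by
  by_contra! hgap
  have hs₁ := hs.max_le_of_ne (g := g) (h := h) (by simpa [heq] using hne)
  beta_reduce at hs₁
  rw [max_le_iff] at hs₁
  have hswap : g * h * (h * g⁻¹) = g * h * (g * h⁻¹)⁻¹ := by group
  have hℓ₂ : ℓ (g * h * (g * h⁻¹)) = 2 * ℓ h := by
    have := hℓ.eq_of_add_lt_max (g := g * h) (h := h * g⁻¹) (lt_max_of_lt_left (by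
      rw [hswap, hℓ.map_mul_mul_mul_inv_inv, hℓ.map_mul_inv_comm]
      linarith [hm.nonneg g]))
    rwa [hswap, hℓ.map_mul_mul_mul_inv_inv, mul_inv_rev, inv_inv, eq_comm] at this
  have hm₂ : m (g * h * (g * h⁻¹)) = 2 * m (g * h) := by
    have hpos : 0 < m (g * h) := by linarith [hm.nonneg g, hm.nonneg h]
    rw [hm.map_mul_eq_add_of_map_mul_inv_lt hpos (heq ▸ hpos)
      (by rw [hm.map_mul_mul_mul_inv_inv, ← heq]; linarith [hm.nonneg g]), ← heq, two_mul]
  have hs₂ := hs.eq_of_add_lt_max (g := g * h) (h := g * h⁻¹)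
    (lt_max_of_lt_left (by rw [hℓ₂, hm₂]; linarith))
  beta_reduce at hs₂
  rw [hℓ₂, hm₂, hℓ.map_mul_mul_mul_inv_inv, hm.map_mul_mul_mul_inv_inv] at hs₂
  linarith [hm.nonneg g]

theorem map_mul_le_add_of_add (hℓ : IsLengthFunction ℓ) (hm : IsLengthFunction m)
    (hs : IsLengthFunction (fun x => ℓ x + m x)) {g h : G}
    (hne : ℓ (g * h) ≠ ℓ (g * h⁻¹)) (heq : m (g * h) = m (g * h⁻¹)) :
    m (g * h) ≤ m g + m h := by
  rcases (hℓ.nonneg g).eq_or_lt with hg | hg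
  · exact hℓ.map_mul_le_add_of_add_of_eq_zero hm hs hg.symm hne heq
  rcases (hℓ.nonneg h).eq_or_lt with hh | hh
  · have := hℓ.map_mul_le_add_of_add_of_eq_zero hm hs (g := h) (h := g) hh.symm
      (by rwa [hℓ.map_mul_comm h g, hℓ.map_mul_inv_comm])
      (by rwa [hm.map_mul_comm h g, hm.map_mul_inv_comm])
    rwa [hm.map_mul_comm h g, add_comm] at this
  have hs₁ := hs.max_le_of_ne (g := g) (h := h) (by simpa [heq] using hne)
  beta_reduce at hs₁
  rw [heq, max_add_add_right, ← heq] at hs₁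
  linarith [hℓ.add_le_max hg hh]

theorem overlapSet_inter_disjointSet_eq_empty (hℓ : IsLengthFunction ℓ) (hm : IsLengthFunction m)
    (hs : IsLengthFunction (fun x => ℓ x + m x)) : OverlapSet ℓ ∩ DisjointSet m = ∅ :=
  Set.eq_empty_iff_forall_notMem.2 fun _ ⟨⟨_, hne⟩, hD⟩ =>
    hD.2.2.not_ge (hℓ.map_mul_le_add_of_add hm hs hne hD.2.1)

theorem map_mul_inv_le_of_add_of_eq_zero (hℓ : IsLengthFunction ℓ) (hm : IsLengthFunction m)
    (hs : IsLengthFunction (fun x => ℓ x + m x)) {g h : G} (hℓg : ℓ g = 0) (hmg : m g = 0)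
    (hlt : ℓ (g * h⁻¹) < ℓ (g * h)) : m (g * h⁻¹) ≤ m (g * h) := by
  by_contra! hcd
  have hℓh : ℓ (g * h) ≤ ℓ h := by
    linarith [(le_max_left _ _).trans (hℓ.max_le_of_ne hlt.ne')]
  have hmh : m (g * h⁻¹) ≤ m h := by
    linarith [(le_max_right _ _).trans (hm.max_le_of_ne hcd.ne)]
  have hℓ₀ := hℓ.nonneg (g * h⁻¹)
  have hm₀ := hm.nonneg (g * h)
  -- `P = g² h⁻¹` and `R = g h⁻²`; the contradiction comes from `s` at the pair `(P, g h)`.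
  have hℓP : ℓ (g * (g * h⁻¹)) = ℓ h := by
    rw [hℓ.map_mul_mul_eq_of_eq_zero hℓg (by rw [hℓ.map_inv]; linarith), hℓ.map_inv]
  have hmP : m (g * (g * h⁻¹)) = m h := by
    have := hs.map_mul_mul_eq_of_eq_zero (g := g) (k := h⁻¹) (by simp [hℓg, hmg])
      (by rw [hℓ.map_inv, hm.map_inv]; linarith)
    beta_reduce at this
    rw [hℓ.map_inv, hm.map_inv, hℓP] at this
    linarith
  have hsR := hs.map_mul_eq_add_of_map_mul_inv_lt (g := g * h⁻¹) (h := h⁻¹)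
    (by linarith) (by rw [hℓ.map_inv, hm.map_inv]; linarith)
    (by rw [inv_inv, inv_mul_cancel_right, hℓg, hmg, hℓ.map_inv, hm.map_inv]; linarith)
  have hℓR := hℓ.map_mul_le_of_map_mul_inv_le (g := g * h⁻¹) (h := h⁻¹)
    (by rw [inv_inv, inv_mul_cancel_right, hℓg, hℓ.map_inv]; linarith)
  have hmR := hm.map_mul_le_of_map_mul_inv_le (g := g * h⁻¹) (h := h⁻¹)
    (by rw [inv_inv, inv_mul_cancel_right, hmg, hm.map_inv]; linarith)
  beta_reduce at hsR
  simp only [hℓ.map_inv, hm.map_inv] at hsR hℓR hmR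
  have hconj : g * (g * h⁻¹) * (g * h)⁻¹ = g * (g * h⁻¹ * h⁻¹) * g⁻¹ := by group
  have hℓQ := hℓ.map_mul_eq_add_of_map_mul_inv_lt (g := g * (g * h⁻¹)) (h := g * h)
    (by linarith) (by linarith) (by rw [hconj, hℓ.map_conj, hℓP]; linarith)
  have hmQ := hm.eq_of_add_lt_max (g := g * (g * h⁻¹)) (h := g * h)
    (lt_max_of_lt_right (by rw [hconj, hm.map_conj, hmP]; linarith))
  have hsQ := hs.eq_of_add_lt_max (g := g * (g * h⁻¹)) (h := g * h)
    (lt_max_of_lt_left (by rw [hℓQ, hmQ, hconj, hm.map_conj]; linarith))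
  beta_reduce at hsQ
  rw [hℓQ, hmQ, hconj, hℓ.map_conj, hm.map_conj] at hsQ
  linarith

theorem map_mul_inv_le_of_add (hℓ : IsLengthFunction ℓ) (hm : IsLengthFunction m)
    (hs : IsLengthFunction (fun x => ℓ x + m x)) {g h : G}
    (hlt : ℓ (g * h⁻¹) < ℓ (g * h)) : m (g * h⁻¹) ≤ m (g * h) := by
  have hℓg₀ := hℓ.nonneg g
  have hmg₀ := hm.nonneg g
  have hℓh₀ := hℓ.nonneg h
  have hmh₀ := hm.nonneg h
  rcases (add_nonneg (hℓ.nonneg g) (hm.nonneg g)).eq_or_lt with hsg | hsg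
  · exact hℓ.map_mul_inv_le_of_add_of_eq_zero hm hs (by linarith) (by linarith) hlt
  rcases (add_nonneg (hℓ.nonneg h) (hm.nonneg h)).eq_or_lt with hsh | hsh
  · have := hℓ.map_mul_inv_le_of_add_of_eq_zero hm hs (g := h) (h := g) (by linarith)
      (by linarith) (by rwa [hℓ.map_mul_comm h g, hℓ.map_mul_inv_comm])
    rwa [hm.map_mul_comm h g, hm.map_mul_inv_comm] at this
  by_contra! hcd
  have hℓ₁ := (le_max_left _ _).trans (hℓ.max_le_of_ne hlt.ne')
  have hm₁ := (le_max_right _ _).trans (hm.max_le_of_ne hcd.ne)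
  have hs₁ := hs.add_le_max (g := g) (h := h) hsg hsh
  beta_reduce at hs₁
  rcases le_max_iff.mp hs₁ with hs₁ | hs₁ <;> linarith

theorem coherentlyOriented_of_add (hℓ : IsLengthFunction ℓ) (hm : IsLengthFunction m)
    (hs : IsLengthFunction (fun x => ℓ x + m x)) : CoherentlyOriented ℓ m := by
  have hs' : IsLengthFunction (fun x => m x + ℓ x) := by simpa only [add_comm] using hs
  rintro ⟨g, h⟩ ⟨⟨-, hℓne⟩, ⟨-, hmne⟩⟩
  exact ⟨fun hlt => (hℓ.map_mul_inv_le_of_add hm hs hlt).lt_of_ne hmne.symm,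
    fun hlt => (hm.map_mul_inv_le_of_add hℓ hs' hlt).lt_of_ne hℓne.symm⟩

end IsLengthFunction

/-- the pointwise sum of two axiomatic length functions is again an
axiomatic length function iff they have compatible combinatorics and are
coherently oriented. -/
theorem sum_isLengthFunction_iff {G : Type*} [Group G] (ℓ m : G → ℝ)
    (hℓ : IsLengthFunction ℓ) (hm : IsLengthFunction m) :
    IsLengthFunction (fun g => ℓ g + m g) ↔
      CompatibleCombinatorics ℓ m ∧ CoherentlyOriented ℓ m := by
  refine ⟨fun hs => ⟨⟨hℓ.overlapSet_inter_disjointSet_eq_empty hm hs, ?_⟩,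
    hℓ.coherentlyOriented_of_add hm hs⟩, fun ⟨hc, hco⟩ => hc.isLengthFunction_add hco hℓ hm⟩
  rw [Set.inter_comm]
  exact hm.overlapSet_inter_disjointSet_eq_empty hℓ (by simpa only [add_comm] using hs)
end

section
/- Let ℓ and m be axiomatic length functions on a group G that have compatible combinatorics and are coherently oriented. Then there exists a pair of elements g, h ∈ G that is simultaneously a good pair for ℓ and a good pair for m. -/
section SGPAux

variable {G : Type*} [Group G]

/-! ### Accessors for the axioms -/

theorem sgp_nonneg {f : G → ℝ} (hf : IsLengthFunction f) (x : G) : 0 ≤ f x := hf.1 x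

theorem sgp_one {f : G → ℝ} (hf : IsLengthFunction f) : f 1 = 0 := hf.2.1

theorem sgp_inv {f : G → ℝ} (hf : IsLengthFunction f) (x : G) : f x = f x⁻¹ := hf.2.2.1 x

theorem sgp_conj {f : G → ℝ} (hf : IsLengthFunction f) (x y : G) :
    f (y * x * y⁻¹) = f x := hf.2.2.2.1 x y

theorem sgp_ax4 {f : G → ℝ} (hf : IsLengthFunction f) (x y : G) :
    f (x * y) = f (x * y⁻¹) ∨ max (f (x * y)) (f (x * y⁻¹)) ≤ f x + f y :=
  hf.2.2.2.2.1 x y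

theorem sgp_ax5 {f : G → ℝ} (hf : IsLengthFunction f) (x y : G) (hx : 0 < f x) (hy : 0 < f y) :
    (f (x * y) = f (x * y⁻¹) ∧ f x + f y < f (x * y)) ∨
      max (f (x * y)) (f (x * y⁻¹)) = f x + f y :=
  hf.2.2.2.2.2.1 x y hx hy

theorem sgp_ax6 {f : G → ℝ} (hf : IsLengthFunction f) :
    ∃ g h : G, 0 < f g + f h - f (g * h⁻¹) ∧
      f g + f h - f (g * h⁻¹) < 2 * min (f g) (f h) :=
  hf.2.2.2.2.2.2

/-- cyclic invariance -/
theorem sgp_cyc {f : G → ℝ} (hf : IsLengthFunction f) (a b : G) : f (a * b) = f (b * a) := by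
  have h := sgp_conj hf (b * a) a
  have e : a * (b * a) * a⁻¹ = a * b := by group
  rw [e] at h
  exact h

/-- value on inverses of words -/
theorem sgp_inv' {f : G → ℝ} (hf : IsLengthFunction f) (x : G) : f x⁻¹ = f x :=
  (sgp_inv hf x).symm

theorem sgp_sq_pos {f : G → ℝ} (hf : IsLengthFunction f) {x : G} (hx : 0 < f x) :
    f (x * x) = 2 * f x := by
  have e1 : x * x⁻¹ = (1 : G) := by group
  rcases sgp_ax5 hf x x hx hx with ⟨heq, hlt⟩ | hmax
  · rw [e1, sgp_one hf] at heq
    rw [heq] at hlt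
    linarith
  · rw [e1, sgp_one hf] at hmax
    rcases max_cases (f (x * x)) 0 with ⟨h1, _⟩ | ⟨h1, h2⟩
    · rw [h1] at hmax; linarith
    · rw [h1] at hmax; linarith

theorem sgp_sq_zero {f : G → ℝ} (hf : IsLengthFunction f) {x : G} (hx : f x = 0) :
    f (x * x) = 0 := by
  have e1 : x * x⁻¹ = (1 : G) := by group
  rcases sgp_ax4 hf x x with heq | hmax
  · rw [e1, sgp_one hf] at heq; exact heq
  · rw [hx] at hmax
    have h1 := le_max_left (f (x * x)) (f (x * x⁻¹))
    have h2 := sgp_nonneg hf (x * x)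
    linarith

theorem sgp_npow_pos {f : G → ℝ} (hf : IsLengthFunction f) {x : G} (hx : 0 < f x) :
    ∀ n : ℕ, f (x ^ n) = n * f x := by
  have key : ∀ n : ℕ, f (x ^ n) = n * f x ∧ f (x ^ (n + 1)) = ((n : ℝ) + 1) * f x := by
    intro n
    induction n with
    | zero =>
      constructor
      · simp [sgp_one hf]
      · simp [pow_one]
    | succ m ihm =>
      refine ⟨by rw [ihm.2]; push_cast; ring, ?_⟩
      have h0 : f (x ^ m) = m * f x := ihm.1
      have h1 : f (x ^ (m + 1)) = ((m : ℝ) + 1) * f x := ihm.2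
      have hp : 0 < f (x ^ (m + 1)) := by
        rw [h1]; positivity
      have e1 : x ^ (m + 1) * x = x ^ (m + 2) := (pow_succ x (m + 1)).symm
      have e2 : x ^ (m + 1) * x⁻¹ = x ^ m := by
        rw [pow_succ]; group
      rcases sgp_ax5 hf (x ^ (m + 1)) x hp hx with ⟨heq, hlt⟩ | hmax
      · rw [e1, e2] at heq
        rw [e1] at hlt
        rw [heq, h0, h1] at hlt
        push_cast at hlt
        nlinarith
      · rw [e1, e2, h0, h1] at hmax
        rcases max_cases (f (x ^ (m + 2))) ((m : ℝ) * f x) with ⟨hm1, _⟩ | ⟨hm1, hm2⟩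
        · rw [hm1] at hmax
          rw [hmax]
          push_cast
          ring
        · rw [hm1] at hmax
          push_cast at hmax
          nlinarith
  exact fun n => (key n).1

theorem sgp_npow_zero {f : G → ℝ} (hf : IsLengthFunction f) {x : G} (hx : f x = 0) :
    ∀ n : ℕ, f (x ^ n) = 0 := by
  have key : ∀ n : ℕ, f (x ^ n) = 0 ∧ f (x ^ (n + 1)) = 0 := by
    intro n
    induction n with
    | zero =>
      constructor
      · simp [sgp_one hf]
      · simp [pow_one, hx]
    | succ m ihm =>
      refine ⟨ihm.2, ?_⟩
      have h0 : f (x ^ m) = 0 := ihm.1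
      have h1 : f (x ^ (m + 1)) = 0 := ihm.2
      have e1 : x ^ (m + 1) * x = x ^ (m + 2) := (pow_succ x (m + 1)).symm
      have e2 : x ^ (m + 1) * x⁻¹ = x ^ m := by
        rw [pow_succ]; group
      rcases sgp_ax4 hf (x ^ (m + 1)) x with heq | hmax
      · rw [e1, e2] at heq
        rw [heq, h0]
      · rw [e1, e2, h1, hx] at hmax
        have h2 := le_max_left (f (x ^ (m + 2))) (f (x ^ m))
        have h3 := sgp_nonneg hf (x ^ (m + 2))
        linarith
  exact fun n => (key n).1

/-! ### Compatibility / coherence appliers -/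

theorem sgp_compat_symm {f g : G → ℝ} (hcc : CompatibleCombinatorics f g) :
    CompatibleCombinatorics g f := by
  obtain ⟨h1, h2⟩ := hcc
  constructor
  · rw [Set.inter_comm]; exact h2
  · rw [Set.inter_comm]; exact h1

theorem sgp_co_symm {f g : G → ℝ} (hco : CoherentlyOriented f g) :
    CoherentlyOriented g f := by
  intro p hp
  exact (hco p ⟨hp.2, hp.1⟩).symm

theorem sgp_coh {f g : G → ℝ} (hco : CoherentlyOriented f g) {a b : G} (hne : a ≠ b)
    (h1 : f (a * b) ≠ f (a * b⁻¹)) (h2 : g (a * b) ≠ g (a * b⁻¹)) :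
    (f (a * b⁻¹) < f (a * b) ↔ g (a * b⁻¹) < g (a * b)) :=
  hco (a, b) ⟨⟨hne, h1⟩, hne, h2⟩

theorem sgp_notOD {f g : G → ℝ} (hcc : CompatibleCombinatorics f g) {a b : G} (hne : a ≠ b)
    (h1 : f (a * b) ≠ f (a * b⁻¹)) :
    ¬(g (a * b) = g (a * b⁻¹) ∧ g a + g b < g (a * b)) := by
  rintro ⟨hq1, hq2⟩
  exact Set.eq_empty_iff_forall_notMem.mp hcc.1 (a, b) ⟨⟨hne, h1⟩, hne, hq1, hq2⟩

theorem sgp_notDO {f g : G → ℝ} (hcc : CompatibleCombinatorics f g) {a b : G} (hne : a ≠ b)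
    (h2 : g (a * b) ≠ g (a * b⁻¹)) :
    ¬(f (a * b) = f (a * b⁻¹) ∧ f a + f b < f (a * b)) := by
  rintro ⟨hq1, hq2⟩
  exact Set.eq_empty_iff_forall_notMem.mp hcc.2 (a, b) ⟨⟨hne, hq1, hq2⟩, hne, h2⟩

end SGPAux

section SGPGood

variable {G : Type*} [Group G]

theorem sgp_gp_posy {f : G → ℝ} {x y : G} (hp : GoodPair f x y) : 0 < f y := by
  obtain ⟨h1, h2⟩ := hp
  have hmin : 0 < min (f x) (f y) := by linarith
  exact lt_of_lt_of_le hmin (min_le_right _ _)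

theorem sgp_gp_posx {f : G → ℝ} {x y : G} (hp : GoodPair f x y) : 0 < f x := by
  obtain ⟨h1, h2⟩ := hp
  have hmin : 0 < min (f x) (f y) := by linarith
  exact lt_of_lt_of_le hmin (min_le_left _ _)

theorem sgp_gp_ne {f : G → ℝ} (hf : IsLengthFunction f) {x y : G} (hp : GoodPair f x y) :
    x ≠ y := by
  intro h
  subst h
  obtain ⟨h1, h2⟩ := hp
  have e : x * x⁻¹ = (1 : G) := by group
  rw [e, sgp_one hf, min_self] at h2
  linarith

/-- first strict bound: `f x - f y < f (x y⁻¹)` -/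
theorem sgp_gp_gt1 {f : G → ℝ} {x y : G} (hp : GoodPair f x y) :
    f x - f y < f (x * y⁻¹) := by
  obtain ⟨h1, h2⟩ := hp
  have := min_le_right (f x) (f y)
  linarith

theorem sgp_gp_gt2 {f : G → ℝ} {x y : G} (hp : GoodPair f x y) :
    f y - f x < f (x * y⁻¹) := by
  obtain ⟨h1, h2⟩ := hp
  have := min_le_left (f x) (f y)
  linarith

theorem sgp_gp_invpos {f : G → ℝ} {x y : G} (hp : GoodPair f x y) :
    0 < f (x * y⁻¹) := by
  rcases le_total (f x) (f y) with h | h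
  · have := sgp_gp_gt2 hp; linarith
  · have := sgp_gp_gt1 hp; linarith

theorem sgp_gp_mul {f : G → ℝ} (hf : IsLengthFunction f) {x y : G} (hp : GoodPair f x y) :
    f (x * y) = f x + f y := by
  have hx := sgp_gp_posx hp
  have hy := sgp_gp_posy hp
  have hlt : f (x * y⁻¹) < f x + f y := by
    have := hp.1; linarith
  rcases sgp_ax5 hf x y hx hy with ⟨heq, hlt2⟩ | hmax
  · rw [heq] at hlt2; linarith
  · rcases max_cases (f (x * y)) (f (x * y⁻¹)) with ⟨h1, _⟩ | ⟨h1, h2⟩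
    · rw [h1] at hmax; exact hmax
    · rw [h1] at hmax; linarith

theorem sgp_gp_lt {f : G → ℝ} (hf : IsLengthFunction f) {x y : G} (hp : GoodPair f x y) :
    f (x * y⁻¹) < f (x * y) := by
  rw [sgp_gp_mul hf hp]
  have := hp.1; linarith

theorem sgp_gp_O {f : G → ℝ} (hf : IsLengthFunction f) {x y : G} (hp : GoodPair f x y) :
    f (x * y) ≠ f (x * y⁻¹) :=
  ne_of_gt (sgp_gp_lt hf hp)

theorem sgp_gp_symm {f : G → ℝ} (hf : IsLengthFunction f) {x y : G} (hp : GoodPair f x y) :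
    GoodPair f y x := by
  have hval : f (y * x⁻¹) = f (x * y⁻¹) := by
    have e : (y * x⁻¹)⁻¹ = x * y⁻¹ := by group
    rw [sgp_inv hf (y * x⁻¹), e]
  obtain ⟨h1, h2⟩ := hp
  constructor
  · rw [hval]; linarith
  · rw [hval, min_comm]; linarith

/-- value: `f (x (y y)⁻¹) = f (x y⁻¹) + f y` -/
theorem sgp_gp_invsq {f : G → ℝ} (hf : IsLengthFunction f) {x y : G} (hp : GoodPair f x y) :
    f (x * (y * y)⁻¹) = f (x * y⁻¹) + f y := by
  have hy := sgp_gp_posy hp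
  have hw := sgp_gp_invpos hp
  have e1 : x * y⁻¹ * y = x := by group
  have e2 : x * y⁻¹ * y⁻¹ = x * (y * y)⁻¹ := by group
  have hgt := sgp_gp_gt1 hp
  rcases sgp_ax5 hf (x * y⁻¹) y hw hy with ⟨heq, hlt⟩ | hmax
  · rw [e1] at hlt
    linarith
  · rw [e1, e2] at hmax
    rcases max_cases (f x) (f (x * (y * y)⁻¹)) with ⟨h1, h2⟩ | ⟨h1, h2⟩
    · rw [h1] at hmax; linarith
    · rw [h1] at hmax; exact hmax

/-- `(x, y²)` is a good pair -/
theorem sgp_gp_sqr {f : G → ℝ} (hf : IsLengthFunction f) {x y : G} (hp : GoodPair f x y) :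
    GoodPair f x (y * y) := by
  have hx := sgp_gp_posx hp
  have hy := sgp_gp_posy hp
  have hv1 : f (y * y) = 2 * f y := sgp_sq_pos hf hy
  have hv2 : f (x * (y * y)⁻¹) = f (x * y⁻¹) + f y := sgp_gp_invsq hf hp
  obtain ⟨h1, h2⟩ := hp
  have hml := min_le_left (f x) (f y)
  have hmr := min_le_right (f x) (f y)
  constructor
  · rw [hv1, hv2]; linarith
  · rw [hv1, hv2]
    rcases min_cases (f x) (2 * f y) with ⟨hm, _⟩ | ⟨hm, _⟩ <;> rw [hm] <;> linarith

/-- `(xy, xy⁻¹)` is a good pair -/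
theorem sgp_gp_prod {f : G → ℝ} (hf : IsLengthFunction f) {x y : G} (hp : GoodPair f x y) :
    GoodPair f (x * y) (x * y⁻¹) := by
  have hx := sgp_gp_posx hp
  have hy := sgp_gp_posy hp
  have hv1 : f (x * y) = f x + f y := sgp_gp_mul hf hp
  have e : (x * y) * (x * y⁻¹)⁻¹ = x * (y * y) * x⁻¹ := by group
  have hv2 : f ((x * y) * (x * y⁻¹)⁻¹) = 2 * f y := by
    rw [e, sgp_conj hf (y * y) x, sgp_sq_pos hf hy]
  have hg1 := sgp_gp_gt1 hp
  have hg2 := sgp_gp_gt2 hp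
  have hlt := sgp_gp_lt hf hp
  constructor
  · rw [hv2, hv1]; linarith
  · rw [hv2]
    rcases min_cases (f (x * y)) (f (x * y⁻¹)) with ⟨hm, _⟩ | ⟨hm, _⟩ <;> rw [hm, hv1] <;>
      linarith

/-- `(xy, y²)` is a good pair -/
theorem sgp_gp_p4 {f : G → ℝ} (hf : IsLengthFunction f) {x y : G} (hp : GoodPair f x y) :
    GoodPair f (x * y) (y * y) := by
  have hx := sgp_gp_posx hp
  have hy := sgp_gp_posy hp
  have hv1 : f (x * y) = f x + f y := sgp_gp_mul hf hp
  have hv2 : f (y * y) = 2 * f y := sgp_sq_pos hf hy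
  have e : (x * y) * (y * y)⁻¹ = x * y⁻¹ := by group
  have hg1 := sgp_gp_gt1 hp
  have hg2 := sgp_gp_gt2 hp
  have hlt := sgp_gp_lt hf hp
  have hml := min_le_left (f x) (f y)
  have hmr := min_le_right (f x) (f y)
  have h2 := hp.2
  constructor
  · rw [e, hv1, hv2]; linarith
  · rw [e, hv2]
    rcases min_cases (f (x * y)) (2 * f y) with ⟨hm, _⟩ | ⟨hm, _⟩ <;> rw [hm] <;>
      rw [hv1] <;> linarith

/-- `(xy⁻¹, (y y)⁻¹)` is a good pair -/
theorem sgp_gp_p5 {f : G → ℝ} (hf : IsLengthFunction f) {x y : G} (hp : GoodPair f x y) :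
    GoodPair f (x * y⁻¹) ((y * y)⁻¹) := by
  have hx := sgp_gp_posx hp
  have hy := sgp_gp_posy hp
  have hv1 : f (x * y) = f x + f y := sgp_gp_mul hf hp
  have hv2 : f ((y * y)⁻¹) = 2 * f y := by
    rw [sgp_inv' hf, sgp_sq_pos hf hy]
  have e : (x * y⁻¹) * ((y * y)⁻¹)⁻¹ = x * y := by group
  have hg1 := sgp_gp_gt1 hp
  have hg2 := sgp_gp_gt2 hp
  have hlt := sgp_gp_lt hf hp
  have hml := min_le_left (f x) (f y)
  have hmr := min_le_right (f x) (f y)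
  have h2 := hp.2
  constructor
  · rw [e, hv1, hv2]; linarith
  · rw [e, hv2]
    rcases min_cases (f (x * y⁻¹)) (2 * f y) with ⟨hm, _⟩ | ⟨hm, _⟩ <;> rw [hm] <;>
      rw [hv1] <;> linarith

end SGPGood

section SGPCore

variable {G : Type*} [Group G]
variable {f g : G → ℝ}

/-- If `(x,y)` is an `f`-good pair with `g`-positive entries, then `g(xy) = g x + g y`
and `g(xy⁻¹) ≤ g x + g y`. -/
theorem sgp_core1 (hf : IsLengthFunction f) (hg : IsLengthFunction g)
    (hcc : CompatibleCombinatorics f g) (hco : CoherentlyOriented f g)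
    {x y : G} (hp : GoodPair f x y) (hx : 0 < g x) (hy : 0 < g y) :
    g (x * y) = g x + g y ∧ g (x * y⁻¹) ≤ g x + g y := by
  have hne := sgp_gp_ne hf hp
  have hO := sgp_gp_O hf hp
  by_cases hmeq : g (x * y) = g (x * y⁻¹)
  · have hnOD := sgp_notOD hcc hne hO
    have hle1 : g (x * y) ≤ g x + g y := by
      by_contra hcon
      push_neg at hcon
      exact hnOD ⟨hmeq, hcon⟩
    rcases sgp_ax5 hg x y hx hy with ⟨_, hlt⟩ | hmax
    · linarith
    · rw [← hmeq, max_self] at hmax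
      exact ⟨hmax, by rw [← hmeq, hmax]⟩
  · have hiff := sgp_coh hco hne hO hmeq
    have hmlt : g (x * y⁻¹) < g (x * y) := hiff.mp (sgp_gp_lt hf hp)
    rcases sgp_ax5 hg x y hx hy with ⟨heq, _⟩ | hmax
    · exact absurd heq hmeq
    · rw [max_eq_left hmlt.le] at hmax
      exact ⟨hmax, by linarith⟩

/-- Trichotomy bound under "no simultaneous good pair". -/
theorem sgp_tri (hf : IsLengthFunction f) (hg : IsLengthFunction g)
    (hcc : CompatibleCombinatorics f g) (hco : CoherentlyOriented f g)
    (hn : ∀ a b : G, GoodPair f a b → GoodPair g a b → False)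
    {x y : G} (hp : GoodPair f x y) (hx : 0 < g x) (hy : 0 < g y) :
    g (x * y⁻¹) ≤ g x + g y - 2 * min (g x) (g y) := by
  obtain ⟨hsum, hle⟩ := sgp_core1 hf hg hcc hco hp hx hy
  by_contra hcon
  push_neg at hcon
  by_cases hD0 : g (x * y⁻¹) = g x + g y
  · -- the pair (xy, xy⁻¹) is simultaneously good
    have e : (x * y) * (x * y⁻¹)⁻¹ = x * (y * y) * x⁻¹ := by group
    have hval : g ((x * y) * (x * y⁻¹)⁻¹) = 2 * g y := by
      rw [e, sgp_conj hg (y * y) x, sgp_sq_pos hg hy]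
    have hgm : GoodPair g (x * y) (x * y⁻¹) := by
      constructor
      · rw [hval, hsum, hD0]; linarith
      · rw [hval, hsum, hD0, min_self]; linarith
    exact hn _ _ (sgp_gp_prod hf hp) hgm
  · have hlt : g (x * y⁻¹) < g x + g y := lt_of_le_of_ne hle hD0
    have hgm : GoodPair g x y := ⟨by linarith, by linarith⟩
    exact hn x y hp hgm

/-- The asymmetric exact value: if `g y < g x` then `g (x y⁻¹) = g x - g y`. -/
theorem sgp_core3' (hf : IsLengthFunction f) (hg : IsLengthFunction g)
    (hcc : CompatibleCombinatorics f g) (hco : CoherentlyOriented f g)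
    (hn : ∀ a b : G, GoodPair f a b → GoodPair g a b → False)
    {x y : G} (hp : GoodPair f x y) (hx : 0 < g x) (hy : 0 < g y)
    (hlt : g y < g x) : g (x * y⁻¹) = g x - g y := by
  have hsq : GoodPair f x (y * y) := sgp_gp_sqr hf hp
  have hyy : g (y * y) = 2 * g y := sgp_sq_pos hg hy
  have hyy' : 0 < g (y * y) := by rw [hyy]; linarith
  have htri := sgp_tri hf hg hcc hco hn hsq hx hyy'
  rw [hyy] at htri
  have hstrict : g (x * (y * y)⁻¹) < g x := by
    rcases min_cases (g x) (2 * g y) with ⟨h1, h2⟩ | ⟨h1, h2⟩ <;> rw [h1] at htri <;> linarith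
  have e1 : x * y⁻¹ * y = x := by group
  have e2 : x * y⁻¹ * y⁻¹ = x * (y * y)⁻¹ := by group
  have hwpos : 0 < g (x * y⁻¹) := by
    rcases (sgp_nonneg hg (x * y⁻¹)).eq_or_lt with h0 | h0
    · exfalso
      rcases sgp_ax4 hg (x * y⁻¹) y with hq | hq
      · rw [e1, e2] at hq; linarith
      · rw [e1, e2, ← h0] at hq
        have := le_max_left (g x) (g (x * (y * y)⁻¹))
        linarith
    · exact h0
  rcases sgp_ax5 hg (x * y⁻¹) y hwpos hy with ⟨heq, _⟩ | hmax
  · rw [e1, e2] at heq; linarith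
  · rw [e1, e2] at hmax
    rw [max_eq_left hstrict.le] at hmax
    linarith

/-- Exact value: `g (x y⁻¹) = |g x - g y|` for an `f`-good pair with positive `g`-entries. -/
theorem sgp_core3 (hf : IsLengthFunction f) (hg : IsLengthFunction g)
    (hcc : CompatibleCombinatorics f g) (hco : CoherentlyOriented f g)
    (hn : ∀ a b : G, GoodPair f a b → GoodPair g a b → False)
    {x y : G} (hp : GoodPair f x y) (hx : 0 < g x) (hy : 0 < g y) :
    g (x * y⁻¹) = |g x - g y| := by
  rcases lt_trichotomy (g x) (g y) with h | h | h
  · have hval := sgp_core3' hf hg hcc hco hn (sgp_gp_symm hf hp) hy hx h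
    have e : (x * y⁻¹)⁻¹ = y * x⁻¹ := by group
    rw [sgp_inv hg (x * y⁻¹), e, hval, abs_of_neg (by linarith : g x - g y < 0)]
    ring
  · have htri := sgp_tri hf hg hcc hco hn hp hx hy
    rw [h, min_self] at htri
    have hnn := sgp_nonneg hg (x * y⁻¹)
    rw [h]
    simp only [sub_self, abs_zero]
    linarith
  · rw [sgp_core3' hf hg hcc hco hn hp hx hy h, abs_of_pos (by linarith : 0 < g x - g y)]

/-- No `f`-good pair has both entries `g`-positive. -/
theorem sgp_core4 (hf : IsLengthFunction f) (hg : IsLengthFunction g)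
    (hcc : CompatibleCombinatorics f g) (hco : CoherentlyOriented f g)
    (hn : ∀ a b : G, GoodPair f a b → GoodPair g a b → False)
    {x y : G} (hp : GoodPair f x y) (hx : 0 < g x) (hy : 0 < g y) : False := by
  have hval := sgp_core3 hf hg hcc hco hn hp hx hy
  have hsum := (sgp_core1 hf hg hcc hco hp hx hy).1
  by_cases hAB : g x = g y
  · -- equal case: use (x, y²) and the derived pair (x·y², x·(y²)⁻¹)
    have hsq : GoodPair f x (y * y) := sgp_gp_sqr hf hp
    have hyy : g (y * y) = 2 * g y := sgp_sq_pos hg hy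
    have hyypos : 0 < g (y * y) := by rw [hyy]; linarith
    have hv1 : g (x * (y * y)) = g x + g (y * y) :=
      (sgp_core1 hf hg hcc hco hsq hx hyypos).1
    have hv2 : g (x * (y * y)⁻¹) = |g x - g (y * y)| :=
      sgp_core3 hf hg hcc hco hn hsq hx hyypos
    have hv2' : g (x * (y * y)⁻¹) = g x := by
      rw [hv2, hyy, ← hAB, abs_of_neg (by linarith : g x - 2 * g x < 0)]
      ring
    have hprod : GoodPair f (x * (y * y)) (x * (y * y)⁻¹) := sgp_gp_prod hf hsq
    have hm1 : 0 < g (x * (y * y)) := by rw [hv1]; linarith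
    have hm2 : 0 < g (x * (y * y)⁻¹) := by rw [hv2']; linarith
    have hfin := sgp_core3 hf hg hcc hco hn hprod hm1 hm2
    have e : (x * (y * y)) * (x * (y * y)⁻¹)⁻¹ = x * ((y * y) * (y * y)) * x⁻¹ := by
      simp [mul_inv_rev, mul_assoc]
    have hL : g ((x * (y * y)) * (x * (y * y)⁻¹)⁻¹) = 2 * g (y * y) := by
      rw [e, sgp_conj hg ((y * y) * (y * y)) x, sgp_sq_pos hg hyypos]
    rw [hL, hv1, hv2', hyy, ← hAB] at hfin
    rw [abs_of_pos (by linarith : (0:ℝ) < g x + 2 * g x - g x)] at hfin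
    linarith
  · rcases lt_or_gt_of_ne hAB with h | h
    · -- g x < g y : use the pair (xy, xy⁻¹)
      have hprod : GoodPair f (x * y) (x * y⁻¹) := sgp_gp_prod hf hp
      have habs : g (x * y⁻¹) = g y - g x := by
        rw [hval, abs_of_neg (by linarith : g x - g y < 0)]; ring
      have hm1 : 0 < g (x * y) := by rw [hsum]; linarith
      have hm2 : 0 < g (x * y⁻¹) := by rw [habs]; linarith
      have hfin := sgp_core3 hf hg hcc hco hn hprod hm1 hm2
      have e : (x * y) * (x * y⁻¹)⁻¹ = x * (y * y) * x⁻¹ := by group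
      have hL : g ((x * y) * (x * y⁻¹)⁻¹) = 2 * g y := by
        rw [e, sgp_conj hg (y * y) x, sgp_sq_pos hg hy]
      rw [hL, hsum, habs] at hfin
      rw [abs_of_pos (by linarith : (0:ℝ) < g x + g y - (g y - g x))] at hfin
      linarith
    · -- g y < g x : use the pair (yx, yx⁻¹)
      have hps := sgp_gp_symm hf hp
      have hprod : GoodPair f (y * x) (y * x⁻¹) := sgp_gp_prod hf hps
      have hsum' : g (y * x) = g y + g x := (sgp_core1 hf hg hcc hco hps hy hx).1
      have habs : g (y * x⁻¹) = g x - g y := by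
        rw [sgp_core3 hf hg hcc hco hn hps hy hx,
          abs_of_neg (by linarith : g y - g x < 0)]
        ring
      have hm1 : 0 < g (y * x) := by rw [hsum']; linarith
      have hm2 : 0 < g (y * x⁻¹) := by rw [habs]; linarith
      have hfin := sgp_core3 hf hg hcc hco hn hprod hm1 hm2
      have e : (y * x) * (y * x⁻¹)⁻¹ = y * (x * x) * y⁻¹ := by group
      have hL : g ((y * x) * (y * x⁻¹)⁻¹) = 2 * g x := by
        rw [e, sgp_conj hg (x * x) y, sgp_sq_pos hg hx]
      rw [hL, hsum', habs] at hfin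
      rw [abs_of_pos (by linarith : (0:ℝ) < g y + g x - (g x - g y))] at hfin
      linarith

/-- No `f`-good pair has exactly one `g`-positive entry (`g x = 0`, `0 < g y` case). -/
theorem sgp_core5' (hf : IsLengthFunction f) (hg : IsLengthFunction g)
    (hcc : CompatibleCombinatorics f g) (hco : CoherentlyOriented f g)
    (hn : ∀ a b : G, GoodPair f a b → GoodPair g a b → False)
    {x y : G} (hp : GoodPair f x y) (hx0 : g x = 0) (hy : 0 < g y) : False := by
  have hne := sgp_gp_ne hf hp
  have hO := sgp_gp_O hf hp
  -- bounds: g(xy) ≤ g y and g(xy⁻¹) ≤ g y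
  have hbounds : g (x * y) ≤ g y ∧ g (x * y⁻¹) ≤ g y := by
    by_cases hmeq : g (x * y) = g (x * y⁻¹)
    · have hnOD := sgp_notOD hcc hne hO
      have : g (x * y) ≤ g x + g y := by
        by_contra hcon; push_neg at hcon; exact hnOD ⟨hmeq, hcon⟩
      rw [hx0] at this
      constructor
      · linarith
      · rw [← hmeq]; linarith
    · rcases sgp_ax4 hg x y with hq | hq
      · exact absurd hq hmeq
      · rw [hx0] at hq
        have h1 := le_max_left (g (x * y)) (g (x * y⁻¹))
        have h2 := le_max_right (g (x * y)) (g (x * y⁻¹))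
        constructor <;> linarith
  obtain ⟨hb1, hb2⟩ := hbounds
  rcases (sgp_nonneg hg (x * y)).eq_or_lt with hβ0 | hβ
  · rcases (sgp_nonneg hg (x * y⁻¹)).eq_or_lt with hγ0 | hγ
    · -- both zero: use (x²y, x²y⁻¹)
      -- g(x·(x·y)) = g y from axiom IV
      have hB1 : g (x * x * y) = g y := by
        have e1 : x * (x * y) = x * x * y := by group
        have e2 : x * (x * y)⁻¹ = x * y⁻¹ * x⁻¹ := by group
        have e3 : g (x * y⁻¹ * x⁻¹) = g y := by
          rw [sgp_conj hg y⁻¹ x]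
          exact (sgp_inv hg y).symm
        rcases sgp_ax4 hg x (x * y) with hq | hq
        · rw [e1, e2, e3] at hq; exact hq
        · rw [e1, e2, e3, hx0, ← hβ0] at hq
          have := le_max_right (g (x * x * y)) (g y)
          linarith
      have hB2 : g (x * x * y⁻¹) = g y := by
        have e1 : x * (x * y⁻¹) = x * x * y⁻¹ := by group
        have e2 : x * (x * y⁻¹)⁻¹ = x * y * x⁻¹ := by group
        have e3 : g (x * y * x⁻¹) = g y := sgp_conj hg y x
        rcases sgp_ax4 hg x (x * y⁻¹) with hq | hq
        · rw [e1, e2, e3] at hq; exact hq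
        · rw [e1, e2, e3, hx0, ← hγ0] at hq
          have := le_max_right (g (x * x * y⁻¹)) (g y)
          linarith
      have h6 : GoodPair f (x * x) y := sgp_gp_symm hf (sgp_gp_sqr hf (sgp_gp_symm hf hp))
      have h7 : GoodPair f ((x * x) * y) ((x * x) * y⁻¹) := sgp_gp_prod hf h6
      have hm1 : 0 < g ((x * x) * y) := by rw [hB1] at *; rw [hB1]; exact hy
      have hm2 : 0 < g ((x * x) * y⁻¹) := by rw [hB2]; exact hy
      have hfin := sgp_core3 hf hg hcc hco hn h7 hm1 hm2
      have e : ((x * x) * y) * ((x * x) * y⁻¹)⁻¹ = (x * x) * (y * y) * (x * x)⁻¹ := by group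
      have hL : g (((x * x) * y) * ((x * x) * y⁻¹)⁻¹) = 2 * g y := by
        rw [e, sgp_conj hg (y * y) (x * x), sgp_sq_pos hg hy]
      rw [hL, hB1, hB2] at hfin
      simp only [sub_self, abs_zero] at hfin
      linarith
    · -- g(xy) = 0, g(xy⁻¹) > 0 : use (xy⁻¹, (y y)⁻¹)
      have h5 : GoodPair f (x * y⁻¹) ((y * y)⁻¹) := sgp_gp_p5 hf hp
      have hyy : g ((y * y)⁻¹) = 2 * g y := by
        rw [sgp_inv' hg, sgp_sq_pos hg hy]
      have hyypos : 0 < g ((y * y)⁻¹) := by rw [hyy]; linarith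
      have hfin := sgp_core3 hf hg hcc hco hn h5 hγ hyypos
      have e : (x * y⁻¹) * ((y * y)⁻¹)⁻¹ = x * y := by group
      rw [e, ← hβ0, hyy] at hfin
      rcases abs_cases (g (x * y⁻¹) - 2 * g y) with ⟨ha, _⟩ | ⟨ha, _⟩ <;> rw [ha] at hfin <;>
        linarith
  · -- g(xy) > 0 : use (xy, y y)
    have h4 : GoodPair f (x * y) (y * y) := sgp_gp_p4 hf hp
    have hyy : g (y * y) = 2 * g y := sgp_sq_pos hg hy
    have hyypos : 0 < g (y * y) := by rw [hyy]; linarith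
    rcases (sgp_nonneg hg (x * y⁻¹)).eq_or_lt with hγ0 | hγ
    · have hfin := sgp_core3 hf hg hcc hco hn h4 hβ hyypos
      have e : (x * y) * (y * y)⁻¹ = x * y⁻¹ := by group
      rw [e, ← hγ0, hyy] at hfin
      rcases abs_cases (g (x * y) - 2 * g y) with ⟨ha, _⟩ | ⟨ha, _⟩ <;> rw [ha] at hfin <;>
        linarith
    · -- both positive: use (xy, xy⁻¹)
      have hprod : GoodPair f (x * y) (x * y⁻¹) := sgp_gp_prod hf hp
      have hfin := sgp_core3 hf hg hcc hco hn hprod hβ hγ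
      have e : (x * y) * (x * y⁻¹)⁻¹ = x * (y * y) * x⁻¹ := by group
      have hL : g ((x * y) * (x * y⁻¹)⁻¹) = 2 * g y := by
        rw [e, sgp_conj hg (y * y) x, sgp_sq_pos hg hy]
      rw [hL] at hfin
      rcases abs_cases (g (x * y) - g (x * y⁻¹)) with ⟨ha, _⟩ | ⟨ha, _⟩ <;> rw [ha] at hfin <;>
        linarith

/-- Under NGP, every `f`-good pair has `g`-length zero entries. -/
theorem sgp_core5 (hf : IsLengthFunction f) (hg : IsLengthFunction g)
    (hcc : CompatibleCombinatorics f g) (hco : CoherentlyOriented f g)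
    (hn : ∀ a b : G, GoodPair f a b → GoodPair g a b → False)
    {x y : G} (hp : GoodPair f x y) : g x = 0 ∧ g y = 0 := by
  rcases (sgp_nonneg hg x).eq_or_lt with hx | hx
  · rcases (sgp_nonneg hg y).eq_or_lt with hy | hy
    · exact ⟨hx.symm, hy.symm⟩
    · exact absurd (sgp_core5' hf hg hcc hco hn hp hx.symm hy) not_false
  · rcases (sgp_nonneg hg y).eq_or_lt with hy | hy
    · exact absurd
        (sgp_core5' hf hg hcc hco hn (sgp_gp_symm hf hp) hy.symm hx) not_false
    · exact absurd (sgp_core4 hf hg hcc hco hn hp hx hy) not_false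

end SGPCore

section SGPEnd

variable {G : Type*} [Group G]
variable {f g : G → ℝ}

/-- The "Z-lemma": if `k` is `f`-hyperbolic and `g`-elliptic, `z` is `f`-elliptic with
`g (z z) > 0`, then `f (k k z) > 0` (uses coherent orientation). -/
theorem sgp_zlem (hf : IsLengthFunction f) (hg : IsLengthFunction g)
    (hcc : CompatibleCombinatorics f g) (hco : CoherentlyOriented f g)
    {k z : G} (hk : 0 < f k) (hmk2 : g (k * k) = 0) (hz : f z = 0) (hmz2 : 0 < g (z * z)) :
    0 < f (k * k * z) := by
  rcases (sgp_nonneg hf (k * k * z)).eq_or_lt with h0 | h0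
  · exfalso
    have hz2 : f (z * z) = 0 := sgp_sq_zero hf hz
    have hkk : f (k * k) = 2 * f k := sgp_sq_pos hf hk
    have hkkpos : 0 < f (k * k) := by rw [hkk]; linarith
    have e1 : (k * k * z) * z = k * k * (z * z) := by group
    have e2 : (k * k * z) * z⁻¹ = k * k := by group
    have hval : f (k * k * (z * z)) = f (k * k) := by
      rcases sgp_ax4 hf (k * k * z) z with hq | hq
      · rw [e1, e2] at hq; exact hq
      · rw [e1, e2, ← h0, hz] at hq
        have := le_max_right (f (k * k * (z * z))) (f (k * k))
        linarith
    have hne1 : k * k * z ≠ z := by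
      intro h
      have h1 : k * k = 1 := mul_right_cancel (b := z) (by rw [one_mul]; exact h)
      rw [h1, sgp_one hf] at hkkpos; linarith
    have hgeq : g ((k * k * z) * z) = g ((k * k * z) * z⁻¹) := by
      by_contra hgne
      refine sgp_notDO hcc hne1 hgne ⟨?_, ?_⟩
      · rw [e1, e2]; exact hval
      · rw [e1, ← h0, hz, hval]; linarith
    rw [e1, e2, hmk2] at hgeq
    have hne2 : k * (z * z) ≠ k := by
      intro h
      have h1 : z * z = 1 := mul_left_cancel (a := k) (by rw [mul_one]; exact h)
      rw [h1, sgp_one hg] at hmz2; linarith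
    have eassoc : k * (k * (z * z)) = k * k * (z * z) := (mul_assoc k k (z * z)).symm
    have hfP : f ((k * (z * z)) * k) = f (k * k * (z * z)) := by
      rw [sgp_cyc hf (k * (z * z)) k, eassoc]
    have hgP : g ((k * (z * z)) * k) = g (k * k * (z * z)) := by
      rw [sgp_cyc hg (k * (z * z)) k, eassoc]
    have hfQ : f ((k * (z * z)) * k⁻¹) = f (z * z) := sgp_conj hf (z * z) k
    have hgQ : g ((k * (z * z)) * k⁻¹) = g (z * z) := sgp_conj hg (z * z) k
    have hOf : f ((k * (z * z)) * k) ≠ f ((k * (z * z)) * k⁻¹) := by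
      rw [hfP, hfQ, hval, hz2]; linarith
    have hOg : g ((k * (z * z)) * k) ≠ g ((k * (z * z)) * k⁻¹) := by
      rw [hgP, hgQ, hgeq]
      exact ne_of_lt hmz2
    have hiff := sgp_coh hco hne2 hOf hOg
    rw [hfP, hfQ, hgP, hgQ, hval, hz2, hgeq] at hiff
    have := hiff.mp hkkpos
    linarith
  · exact h0

/-- Bootstrap: `g (k k z) > 0` once `f (k k z) > 0`. -/
theorem sgp_boot (hf : IsLengthFunction f) (hg : IsLengthFunction g)
    (hcc : CompatibleCombinatorics f g) (hco : CoherentlyOriented f g)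
    {k z : G} (hkkz : 0 < f (k * k * z)) (hz : f z = 0) (hmz : 0 < g z) :
    0 < g (k * k * z) := by
  have hne : k * z ≠ k := by
    intro h
    have h1 : z = 1 := mul_left_cancel (a := k) (by rw [mul_one]; exact h)
    rw [h1, sgp_one hg] at hmz; linarith
  have eassoc : k * (k * z) = k * k * z := (mul_assoc k k z).symm
  have hfP : f ((k * z) * k) = f (k * k * z) := by rw [sgp_cyc hf (k * z) k, eassoc]
  have hgP : g ((k * z) * k) = g (k * k * z) := by rw [sgp_cyc hg (k * z) k, eassoc]
  have hfQ : f ((k * z) * k⁻¹) = f z := sgp_conj hf z k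
  have hgQ : g ((k * z) * k⁻¹) = g z := sgp_conj hg z k
  by_cases hOg : g ((k * z) * k) = g ((k * z) * k⁻¹)
  · rw [hgP, hgQ] at hOg; rw [hOg]; exact hmz
  · have hOf : f ((k * z) * k) ≠ f ((k * z) * k⁻¹) := by
      rw [hfP, hfQ, hz]; linarith
    have hiff := sgp_coh hco hne hOf hOg
    have hflt : f ((k * z) * k⁻¹) < f ((k * z) * k) := by rw [hfP, hfQ, hz]; exact hkkz
    have hglt := hiff.mp hflt
    rw [hgP, hgQ] at hglt
    linarith

/-- Values of a mixed pair whose difference is `g`-trivial and `f`-hyperbolic. -/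
theorem sgp_pairlem (hf : IsLengthFunction f) (hg : IsLengthFunction g)
    (hcc : CompatibleCombinatorics f g) (hco : CoherentlyOriented f g)
    {a b : G} (hla : 0 < f a) (hlb : 0 < f b) (hma : 0 < g a) (hmb : 0 < g b)
    (hm0 : g (a * b⁻¹) = 0) (hl0 : 0 < f (a * b⁻¹)) :
    g (a * b) = g a + g b ∧ f (a * b) = f a + f b ∧ f (a * b⁻¹) ≤ f (a * b) := by
  have hne : a ≠ b := by
    intro h
    subst h
    have e : a * a⁻¹ = (1 : G) := by group
    rw [e, sgp_one hf] at hl0; linarith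
  have hgab : g (a * b) = g a + g b := by
    rcases sgp_ax5 hg a b hma hmb with ⟨heq, hlt⟩ | hmax
    · rw [heq, hm0] at hlt; linarith
    · rw [hm0] at hmax
      rcases max_cases (g (a * b)) 0 with ⟨h1, _⟩ | ⟨h1, _⟩
      · rw [h1] at hmax; exact hmax
      · rw [h1] at hmax; linarith
  have hOg : g (a * b) ≠ g (a * b⁻¹) := by rw [hgab, hm0]; linarith
  have hnDO := sgp_notDO hcc hne hOg
  rcases sgp_ax5 hf a b hla hlb with ⟨heq, hlt⟩ | hmax
  · exact absurd ⟨heq, hlt⟩ hnDO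
  · by_cases hOf : f (a * b) = f (a * b⁻¹)
    · rw [hOf, max_self] at hmax
      exact ⟨hgab, hOf.trans hmax, le_of_eq hOf.symm⟩
    · have hiff := sgp_coh hco hne hOf hOg
      have hglt : g (a * b⁻¹) < g (a * b) := by rw [hgab, hm0]; linarith
      have hflt : f (a * b⁻¹) < f (a * b) := hiff.mpr hglt
      rw [max_eq_left hflt.le] at hmax
      exact ⟨hgab, hmax, hflt.le⟩

/-- Linear upper bound for `f ((k⁻¹)^i z)`. -/
theorem sgp_seqb (hf : IsLengthFunction f) {k z : G} (hk : 0 < f k) (hz : f z = 0) :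
    ∀ i : ℕ, f ((k⁻¹) ^ i * z) ≤ f (k⁻¹ * z) + i * f k := by
  have hnn := sgp_nonneg hf (k⁻¹ * z)
  have hfki : f k⁻¹ = f k := sgp_inv' hf k
  have key : ∀ i : ℕ, (f ((k⁻¹) ^ i * z) ≤ f (k⁻¹ * z) + i * f k) ∧
      (f ((k⁻¹) ^ (i + 1) * z) ≤ f (k⁻¹ * z) + ((i : ℝ) + 1) * f k) := by
    intro i
    induction i with
    | zero =>
      constructor
      · rw [pow_zero, one_mul, hz]
        push_cast
        linarith
      · rw [zero_add, pow_one]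
        push_cast
        linarith
    | succ m ihm =>
      constructor
      · have := ihm.2
        push_cast
        linarith
      · have ei1 : k⁻¹ * ((k⁻¹) ^ (m + 1) * z) = (k⁻¹) ^ (m + 1 + 1) * z := by
          rw [← mul_assoc, ← pow_succ']
        have ei2 : k * ((k⁻¹) ^ (m + 1) * z) = (k⁻¹) ^ m * z := by
          simp [pow_succ', mul_assoc]
        have h1 : f (((k⁻¹) ^ (m + 1) * z) * k⁻¹) = f ((k⁻¹) ^ (m + 1 + 1) * z) := by
          rw [sgp_cyc hf _ k⁻¹, ei1]
        have h2 : f (((k⁻¹) ^ (m + 1) * z) * (k⁻¹)⁻¹) = f ((k⁻¹) ^ m * z) := by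
          rw [inv_inv, sgp_cyc hf _ k, ei2]
        rcases sgp_ax4 hf ((k⁻¹) ^ (m + 1) * z) k⁻¹ with hq | hq
        · rw [h1, h2] at hq
          have h3 := ihm.1
          rw [hq]
          push_cast
          push_cast at h3
          linarith
        · rw [h1, h2, hfki] at hq
          have h3 := le_max_left (f ((k⁻¹) ^ (m + 1 + 1) * z)) (f ((k⁻¹) ^ m * z))
          have h4 := ihm.2
          push_cast
          push_cast at h4
          linarith
  exact fun i => (key i).1

/-- `f (k⁻¹ z) < f (k k z) + 2 f k`. -/
theorem sgp_L1 (hf : IsLengthFunction f) {k z : G} (hk : 0 < f k) (hz : f z = 0)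
    (hkkz : 0 < f (k * k * z)) : f (k⁻¹ * z) < f (k * k * z) + 2 * f k := by
  have eassoc : k * (k * z) = k * k * z := (mul_assoc k k z).symm
  have hzk : f (z * k) = f (k * z) := sgp_cyc hf z k
  have hzk' : f (z * k⁻¹) = f (k⁻¹ * z) := sgp_cyc hf z k⁻¹
  rcases (sgp_nonneg hf (k * z)).eq_or_lt with hA | hA
  · rcases sgp_ax4 hf z k with hq | hq
    · rw [hzk, hzk', ← hA] at hq
      rw [← hq]; linarith
    · rw [hzk', hz] at hq
      have h1 := le_max_right (f (z * k)) (f (k⁻¹ * z))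
      linarith
  · have hP : f ((k * z) * k) = f (k * k * z) := by rw [sgp_cyc hf (k * z) k, eassoc]
    have hQ : f ((k * z) * k⁻¹) = f z := sgp_conj hf z k
    have hv : f (k * k * z) = f (k * z) + f k := by
      rcases sgp_ax5 hf (k * z) k hA hk with ⟨heq, _⟩ | hmax
      · rw [hP, hQ, hz] at heq; linarith
      · rw [hP, hQ, hz] at hmax
        rcases max_cases (f (k * k * z)) (0 : ℝ) with ⟨h1, _⟩ | ⟨h1, _⟩
        · rw [h1] at hmax; exact hmax
        · rw [h1] at hmax; linarith
    rcases sgp_ax4 hf z k with hq | hq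
    · rw [hzk, hzk'] at hq
      rw [← hq, hv]; linarith
    · rw [hzk', hz] at hq
      have h1 := le_max_right (f (z * k)) (f (k⁻¹ * z))
      linarith

/-- Final pair construction: abstract version. -/
theorem sgp_final_pair (hf : IsLengthFunction f) (hg : IsLengthFunction g)
    (hcc : CompatibleCombinatorics f g) (hco : CoherentlyOriented f g)
    (hn : ∀ a b : G, GoodPair f a b → GoodPair g a b → False)
    {A B : G} (hAf : 0 < f A) (hBf : 0 < f B) (hAg : 0 < g A) (hBg : 0 < g B)
    (hΛg : g (A * B⁻¹) = 0) (hΛpos : 0 < f (A * B⁻¹))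
    (hc2 : f B < f A + f (A * B⁻¹)) (hc3 : f A < f B + f (A * B⁻¹)) : False := by
  obtain ⟨hab_g, hab_f, hab_ge⟩ := sgp_pairlem hf hg hcc hco hAf hBf hAg hBg hΛg hΛpos
  have hYf : f (B * B) = 2 * f B := sgp_sq_pos hf hBf
  have hYg : g (B * B) = 2 * g B := sgp_sq_pos hg hBg
  have hprodid : (A * B) * (B * B)⁻¹ = A * B⁻¹ := by group
  have h' : f (A * B⁻¹) ≤ f A + f B := hab_f ▸ hab_ge
  have hGP : GoodPair f (A * B) (B * B) := by
    constructor
    · rw [hprodid, hYf, hab_f]; linarith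
    · rw [hprodid, hYf, hab_f]
      rcases min_cases (f A + f B) (2 * f B) with ⟨hm, _⟩ | ⟨hm, _⟩ <;> rw [hm] <;> linarith
  exact sgp_core4 hf hg hcc hco hn hGP (by rw [hab_g]; linarith) (by rw [hYg]; linarith)

/-- Endgame: a mixed hyperbolic/elliptic configuration is impossible. -/
theorem sgp_endgame (hf : IsLengthFunction f) (hg : IsLengthFunction g)
    (hcc : CompatibleCombinatorics f g) (hco : CoherentlyOriented f g)
    (hn : ∀ a b : G, GoodPair f a b → GoodPair g a b → False)
    {k z : G} (hk : 0 < f k) (hmk : g k = 0) (hz : f z = 0) (hmz : 0 < g z) : False := by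
  have hkinv : 0 < f k⁻¹ := by rw [← sgp_inv hf k]; exact hk
  have hgkinv : g k⁻¹ = 0 := by rw [← sgp_inv hg k]; exact hmk
  have hmzz : 0 < g (z * z) := by rw [sgp_sq_pos hg hmz]; linarith
  have hmk2 : g (k * k) = 0 := sgp_sq_zero hg hmk
  have haf : 0 < f (k * k * z) := sgp_zlem hf hg hcc hco hk hmk2 hz hmzz
  have hag : 0 < g (k * k * z) := sgp_boot hf hg hcc hco haf hz hmz
  obtain ⟨n, hn'⟩ := exists_nat_gt (f (k * k * z) / f k)
  have hfa_lt : f (k * k * z) < ((n + 1 + (n + 1) + 2 : ℕ) : ℝ) * f k := by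
    have h1 : f (k * k * z) < n * f k := (div_lt_iff₀ hk).mp hn'
    have h2 : ((n : ℝ)) * f k ≤ ((n + 1 + (n + 1) + 2 : ℕ) : ℝ) * f k := by
      apply mul_le_mul_of_nonneg_right _ hk.le
      push_cast
      linarith
    linarith
  set s : ℕ := n + 1 with hs
  have hspos : (0 : ℝ) < (s : ℝ) := by
    rw [hs]; push_cast; linarith [Nat.cast_nonneg (α := ℝ) n]
  have hκf : 0 < f ((k⁻¹) ^ s) := by
    rw [sgp_npow_pos hf hkinv s, sgp_inv' hf k]
    exact mul_pos hspos hk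
  have hκ2 : g ((k⁻¹) ^ s * (k⁻¹) ^ s) = 0 := by
    rw [← pow_add]
    exact sgp_npow_zero hg hgkinv (s + s)
  have hbf : 0 < f ((k⁻¹) ^ s * (k⁻¹) ^ s * z) := sgp_zlem hf hg hcc hco hκf hκ2 hz hmzz
  have hbg : 0 < g ((k⁻¹) ^ s * (k⁻¹) ^ s * z) := sgp_boot hf hg hcc hco hbf hz hmz
  -- identify a * b⁻¹ with k ^ (s + s + 2)
  have habinv : (k * k * z) * ((k⁻¹) ^ s * (k⁻¹) ^ s * z)⁻¹ = k ^ (s + s + 2) := by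
    have h1 : (k⁻¹) ^ s * (k⁻¹) ^ s = (k ^ (s + s))⁻¹ := by rw [← pow_add, inv_pow]
    have h2 : k ^ (s + s + 2) = k * k * k ^ (s + s) := by
      have h3 : s + s + 2 = s + s + 1 + 1 := rfl
      rw [h3, pow_succ', pow_succ', ← mul_assoc]
    rw [h1, h2, mul_inv_rev, inv_inv]
    simp [mul_assoc]
  have hΛf : f ((k * k * z) * ((k⁻¹) ^ s * (k⁻¹) ^ s * z)⁻¹) = ((s + s + 2 : ℕ) : ℝ) * f k := by
    rw [habinv, sgp_npow_pos hf hk]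
  have hΛg : g ((k * k * z) * ((k⁻¹) ^ s * (k⁻¹) ^ s * z)⁻¹) = 0 := by
    rw [habinv]
    exact sgp_npow_zero hg hmk (s + s + 2)
  have hcastpos : (0 : ℝ) < ((s + s + 2 : ℕ) : ℝ) := by push_cast; linarith
  have hΛpos : 0 < f ((k * k * z) * ((k⁻¹) ^ s * (k⁻¹) ^ s * z)⁻¹) := by
    rw [hΛf]; exact mul_pos hcastpos hk
  -- bound on f b
  have hbb := sgp_seqb hf hk hz (s + s)
  have hbeq : (k⁻¹) ^ s * (k⁻¹) ^ s * z = (k⁻¹) ^ (s + s) * z := by rw [← pow_add]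
  have hL1 := sgp_L1 hf hk hz haf
  have hc2 : f ((k⁻¹) ^ s * (k⁻¹) ^ s * z) <
      f (k * k * z) + f ((k * k * z) * ((k⁻¹) ^ s * (k⁻¹) ^ s * z)⁻¹) := by
    rw [hΛf, hbeq]
    push_cast
    push_cast at hbb
    linarith
  have hc3 : f (k * k * z) <
      f ((k⁻¹) ^ s * (k⁻¹) ^ s * z) + f ((k * k * z) * ((k⁻¹) ^ s * (k⁻¹) ^ s * z)⁻¹) := by
    rw [hΛf]
    have : ((n + 1 + (n + 1) + 2 : ℕ) : ℝ) = ((s + s + 2 : ℕ) : ℝ) := by rw [hs]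
    rw [this] at hfa_lt
    linarith
  exact sgp_final_pair hf hg hcc hco hn haf hbf hag hbg hΛg hΛpos hc2 hc3

end SGPEnd

/-- two compatible length functions admit a simultaneous good pair. -/
theorem exists_simultaneous_good_pair {G : Type*} [Group G] (ℓ m : G → ℝ)
    (hℓ : IsLengthFunction ℓ) (hm : IsLengthFunction m)
    (hcc : CompatibleCombinatorics ℓ m) (hco : CoherentlyOriented ℓ m) :
    ∃ g h : G, GoodPair ℓ g h ∧ GoodPair m g h := by
  by_contra hcon
  push_neg at hcon
  have hn : ∀ a b : G, GoodPair ℓ a b → GoodPair m a b → False := fun a b h1 h2 =>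
    hcon a b h1 h2
  have hnm : ∀ a b : G, GoodPair m a b → GoodPair ℓ a b → False := fun a b h1 h2 =>
    hn a b h2 h1
  have hccm := sgp_compat_symm hcc
  have hcom := sgp_co_symm hco
  obtain ⟨x, y, hxy⟩ := sgp_ax6 hℓ
  have hgpxy : GoodPair ℓ x y := hxy
  obtain ⟨u, v, huv⟩ := sgp_ax6 hm
  have hgpuv : GoodPair m u v := huv
  have hkpos : 0 < ℓ (x * y) := by
    rw [sgp_gp_mul hℓ hgpxy]
    have h1 := sgp_gp_posx hgpxy
    have h2 := sgp_gp_posy hgpxy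
    linarith
  have hmk : m (x * y) = 0 := (sgp_core5 hℓ hm hcc hco hn (sgp_gp_prod hℓ hgpxy)).1
  have hzpos : 0 < m (u * v) := by
    rw [sgp_gp_mul hm hgpuv]
    have h1 := sgp_gp_posx hgpuv
    have h2 := sgp_gp_posy hgpuv
    linarith
  have hzl : ℓ (u * v) = 0 := (sgp_core5 hm hℓ hccm hcom hnm (sgp_gp_prod hm hgpuv)).1
  exact sgp_endgame hℓ hm hcc hco hn hkpos hmk hzl hzpos
end

section
/- Let ℓ and m be axiomatic length functions on a group G that have compatible combinatorics. Then ℓ + m satisfies length-function axiom IV: for all g, h ∈ G, either (ℓ+m)(gh) = (ℓ+m)(gh⁻¹), or max{(ℓ+m)(gh), (ℓ+m)(gh⁻¹)} ≤ (ℓ+m)(g) + (ℓ+m)(h). -/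
/-- if `ℓ` and `m` have compatible combinatorics, then `ℓ + m`
satisfies length-function axiom IV. -/
theorem sum_axiom_IV {G : Type*} [Group G] (ℓ m : G → ℝ)
    (hℓ : IsLengthFunction ℓ) (hm : IsLengthFunction m)
    (hcc : CompatibleCombinatorics ℓ m) :
    ∀ g h : G,
      ℓ (g * h) + m (g * h) = ℓ (g * h⁻¹) + m (g * h⁻¹) ∨
      max (ℓ (g * h) + m (g * h)) (ℓ (g * h⁻¹) + m (g * h⁻¹)) ≤
        (ℓ g + m g) + (ℓ h + m h) := by
  obtain ⟨hℓ0, hℓ1, hℓ2, hℓ3, hℓ4, hℓ5, hℓ6⟩ := hℓ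
  obtain ⟨hm0, hm1, hm2, hm3, hm4, hm5, hm6⟩ := hm
  obtain ⟨hc1, hc2⟩ := hcc
  intro g h
  by_cases hgh : g = h
  · subst hgh
    right
    have h1 : ℓ (g * g⁻¹) = 0 := by simpa using hℓ1
    have h2 : m (g * g⁻¹) = 0 := by simpa using hm1
    have hℓgg : ℓ (g * g) ≤ ℓ g + ℓ g := by
      rcases hℓ4 g g with heq | hle
      · rw [heq, h1]; have := hℓ0 g; linarith
      · exact le_trans (le_max_left _ _) hle
    have hmgg : m (g * g) ≤ m g + m g := by
      rcases hm4 g g with heq | hle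
      · rw [heq, h2]; have := hm0 g; linarith
      · exact le_trans (le_max_left _ _) hle
    apply max_le
    · linarith
    · rw [h1, h2]
      have := hℓ0 g; have := hm0 g; linarith
  · by_cases hOℓ : ℓ (g * h) = ℓ (g * h⁻¹)
    · by_cases hOm : m (g * h) = m (g * h⁻¹)
      · left; rw [hOℓ, hOm]
      · right
        have hmax_m : max (m (g * h)) (m (g * h⁻¹)) ≤ m g + m h := by
          rcases hm4 g h with heq | hle
          · exact absurd heq hOm
          · exact hle
        have hℓle : ℓ (g * h) ≤ ℓ g + ℓ h := by
          by_contra hlt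
          push_neg at hlt
          have hmem : ((g, h) : G × G) ∈ DisjointSet ℓ ∩ OverlapSet m :=
            ⟨⟨hgh, hOℓ, hlt⟩, hgh, hOm⟩
          rw [hc2] at hmem
          exact hmem
        have hℓle' : ℓ (g * h⁻¹) ≤ ℓ g + ℓ h := hOℓ ▸ hℓle
        have h1 := le_trans (le_max_left (m (g*h)) (m (g*h⁻¹))) hmax_m
        have h2 := le_trans (le_max_right (m (g*h)) (m (g*h⁻¹))) hmax_m
        apply max_le <;> linarith
    · right
      have hmax_ℓ : max (ℓ (g * h)) (ℓ (g * h⁻¹)) ≤ ℓ g + ℓ h := by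
        rcases hℓ4 g h with heq | hle
        · exact absurd heq hOℓ
        · exact hle
      have hmle : m (g * h) ≤ m g + m h ∧ m (g * h⁻¹) ≤ m g + m h := by
        by_cases hOm : m (g * h) = m (g * h⁻¹)
        · have : m (g * h) ≤ m g + m h := by
            by_contra hlt
            push_neg at hlt
            have hmem : ((g, h) : G × G) ∈ OverlapSet ℓ ∩ DisjointSet m :=
              ⟨⟨hgh, hOℓ⟩, hgh, hOm, hlt⟩
            rw [hc1] at hmem
            exact hmem
          exact ⟨this, hOm ▸ this⟩
        · have hmax_m : max (m (g * h)) (m (g * h⁻¹)) ≤ m g + m h := by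
            rcases hm4 g h with heq | hle
            · exact absurd heq hOm
            · exact hle
          exact ⟨le_trans (le_max_left _ _) hmax_m,
            le_trans (le_max_right _ _) hmax_m⟩
      have h1 := le_trans (le_max_left (ℓ (g*h)) (ℓ (g*h⁻¹))) hmax_ℓ
      have h2 := le_trans (le_max_right (ℓ (g*h)) (ℓ (g*h⁻¹))) hmax_ℓ
      obtain ⟨h3, h4⟩ := hmle
      apply max_le <;> linarith
end

section
/- Let T be a G-tree with translation length function ℓ = ℓ_T. For all distinct g, h ∈ G: C_g ∩ C_h = ∅ if and only if ℓ(gh) = ℓ(gh⁻¹) > ℓ(g) + ℓ(h). -/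
/-- A real tree: a nonempty complete geodesic 0-hyperbolic metric space. -/
def IsRealTree (T : Type*) [MetricSpace T] : Prop :=
  Nonempty T ∧ CompleteSpace T ∧
  (∀ x y : T, ∃ f : ℝ → T, f 0 = x ∧ f (dist x y) = y ∧
    ∀ s ∈ Set.Icc (0 : ℝ) (dist x y), ∀ t ∈ Set.Icc (0 : ℝ) (dist x y),
      dist (f s) (f t) = |s - t|) ∧
  (∀ x y z w : T, dist x y + dist z w ≤
    max (dist x z + dist y w) (dist x w + dist y z))

/-- `σ : T → G → T` is a right action of `G` on `T` by isometries. -/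
def IsIsomRightAction {G : Type*} [Group G] {T : Type*} [MetricSpace T]
    (σ : T → G → T) : Prop :=
  (∀ p : T, σ p 1 = p) ∧
  (∀ (p : T) (g h : G), σ p (g * h) = σ (σ p g) h) ∧
  (∀ g : G, Isometry (fun p : T => σ p g))

/-- The translation length function of the action `σ`: `ℓ(g) = inf_p d(p, p·g)`. -/
noncomputable def transLen {G : Type*} [Group G] {T : Type*} [MetricSpace T]
    (σ : T → G → T) (g : G) : ℝ :=
  ⨅ p : T, dist p (σ p g)

/-- The characteristic set `C_g = {p : d(p, p·g) = ℓ(g)}` of `g`. -/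
def charSet {G : Type*} [Group G] {T : Type*} [MetricSpace T]
    (σ : T → G → T) (g : G) : Set T :=
  {p : T | dist p (σ p g) = transLen σ g}

/-- The segment `[p,q] = {z : d(p,z) + d(z,q) = d(p,q)}`. -/
def treeSegment {T : Type*} [MetricSpace T] (p q : T) : Set T :=
  {z : T | dist p z + dist z q = dist p q}

section TreeLemmas

variable {T : Type*} [MetricSpace T]

/-- Four point condition abbreviation. -/
def FourPt (T : Type*) [MetricSpace T] : Prop :=
  ∀ x y z w : T, dist x y + dist z w ≤
    max (dist x z + dist y w) (dist x w + dist y z)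

/-- Two points on a segment at the same distance from an endpoint coincide. -/
lemma seg_unique (h4 : FourPt T) {u w v₁ v₂ : T}
    (h1 : dist u v₁ + dist v₁ w = dist u w)
    (h2 : dist u v₂ + dist v₂ w = dist u w)
    (h3 : dist u v₁ = dist u v₂) : v₁ = v₂ := by
  have H := h4 v₁ v₂ u w
  have c1 : dist v₁ u = dist u v₁ := dist_comm _ _
  have c2 : dist v₂ u = dist u v₂ := dist_comm _ _
  have hle : dist v₁ v₂ ≤ 0 := by
    rcases le_max_iff.mp H with h | h <;> linarith
  exact dist_le_zero.mp hle

/-- Distance between two points on a common segment. -/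
lemma between_dist (h4 : FourPt T) {u w v₁ v₂ : T}
    (h1 : dist u v₁ + dist v₁ w = dist u w)
    (h2 : dist u v₂ + dist v₂ w = dist u w)
    (h3 : dist u v₁ ≤ dist u v₂) : dist v₁ v₂ = dist u v₂ - dist u v₁ := by
  have H := h4 u w v₁ v₂
  have c1 : dist w v₁ = dist v₁ w := dist_comm _ _
  have c2 : dist w v₂ = dist v₂ w := dist_comm _ _
  have tr : dist u v₂ ≤ dist u v₁ + dist v₁ v₂ := dist_triangle _ _ _
  have hup : dist v₁ v₂ ≤ dist u v₂ - dist u v₁ := by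
    rcases le_max_iff.mp H with h | h <;> linarith
  linarith

/-- Transitivity of betweenness. -/
lemma between_trans {p y q x : T}
    (h1 : dist p y + dist y q = dist p q)
    (h2 : dist p q + dist q x = dist p x) :
    dist p y + dist y x = dist p x := by
  have t1 : dist y x ≤ dist y q + dist q x := dist_triangle _ _ _
  have t2 : dist p x ≤ dist p y + dist y x := dist_triangle _ _ _
  linarith

/-- Geodesicity abbreviation. -/
def Geod (T : Type*) [MetricSpace T] : Prop :=
  ∀ x y : T, ∃ f : ℝ → T, f 0 = x ∧ f (dist x y) = y ∧
    ∀ s ∈ Set.Icc (0 : ℝ) (dist x y), ∀ t ∈ Set.Icc (0 : ℝ) (dist x y),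
      dist (f s) (f t) = |s - t|

/-- A point at given distance along a geodesic. -/
lemma point_at (hg : Geod T) (x y : T) (t : ℝ) (h0 : 0 ≤ t) (h1 : t ≤ dist x y) :
    ∃ m : T, dist x m = t ∧ dist m y = dist x y - t := by
  obtain ⟨f, hf0, hf1, hfd⟩ := hg x y
  refine ⟨f t, ?_, ?_⟩
  · have := hfd 0 ⟨le_refl 0, dist_nonneg⟩ t ⟨h0, h1⟩
    rw [hf0] at this
    rw [this, zero_sub, abs_neg, abs_of_nonneg h0]
  · have := hfd t ⟨h0, h1⟩ (dist x y) ⟨dist_nonneg, le_refl _⟩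
    rw [hf1] at this
    rw [this, abs_of_nonpos (by linarith), neg_sub]

/-- Existence of medians. -/
lemma median_exists (h4 : FourPt T) (hg : Geod T) (x y z : T) :
    ∃ m : T, 2 * dist x m = dist x y + dist x z - dist y z ∧
      2 * dist y m = dist x y + dist y z - dist x z ∧
      2 * dist z m = dist x z + dist y z - dist x y := by
  have t0 : 0 ≤ (dist x y + dist x z - dist y z) / 2 := by
    have := dist_triangle y x z
    have c : dist y x = dist x y := dist_comm _ _
    linarith
  have t1 : (dist x y + dist x z - dist y z) / 2 ≤ dist x y := by
    have := dist_triangle x y z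
    have c : dist y z = dist y z := rfl
    linarith [dist_triangle x y z]
  obtain ⟨m, hm1, hm2⟩ := point_at hg x y _ t0 t1
  refine ⟨m, by linarith, ?_, ?_⟩
  · have c : dist y m = dist m y := dist_comm _ _
    rw [c, hm2]; ring
  · -- dist z m = (dist x z + dist y z - dist x y)/2
    have hbet : dist x m + dist m y = dist x y := by rw [hm1, hm2]; ring
    have low1 : dist x z ≤ dist x m + dist m z := dist_triangle _ _ _
    have H := h4 m z x y
    have c1 : dist m x = dist x m := dist_comm _ _
    have c2 : dist z y = dist y z := dist_comm _ _
    have c3 : dist z x = dist x z := dist_comm _ _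
    have c4 : dist m z = dist z m := dist_comm _ _
    have hup : dist m z ≤ (dist x z + dist y z - dist x y) / 2 := by
      rcases le_max_iff.mp H with h | h <;> linarith
    linarith

end TreeLemmas

section ActionLemmas

variable {G : Type*} [Group G] {T : Type*} [MetricSpace T] {σ : T → G → T}

lemma act_dist (hσ : IsIsomRightAction σ) (k : G) (a b : T) :
    dist (σ a k) (σ b k) = dist a b := (hσ.2.2 k).dist_eq a b

lemma act_mul (hσ : IsIsomRightAction σ) (a : T) (k k' : G) :
    σ (σ a k) k' = σ a (k * k') := (hσ.2.1 a k k').symm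

lemma act_inv_cancel (hσ : IsIsomRightAction σ) (a : T) (k : G) :
    σ (σ a k) k⁻¹ = a := by
  rw [act_mul hσ, mul_inv_cancel, hσ.1]

lemma act_inv_cancel' (hσ : IsIsomRightAction σ) (a : T) (k : G) :
    σ (σ a k⁻¹) k = a := by
  rw [act_mul hσ, inv_mul_cancel, hσ.1]

/-- `d(x·k, u) = d(x, u·k⁻¹)`. -/
lemma dist_act_left (hσ : IsIsomRightAction σ) (k : G) (a b : T) :
    dist (σ a k) b = dist a (σ b k⁻¹) := by
  conv_lhs => rw [← act_dist hσ k⁻¹ (σ a k) b, act_inv_cancel hσ]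

/-- `d(a, u·k) = d(a·k⁻¹, u)`. -/
lemma dist_act_right (hσ : IsIsomRightAction σ) (k : G) (a b : T) :
    dist a (σ b k) = dist (σ a k⁻¹) b := by
  conv_lhs => rw [← act_dist hσ k⁻¹ a (σ b k), act_inv_cancel hσ]

lemma transLen_bdd (σ : T → G → T) (k : G) :
    BddBelow (Set.range fun p : T => dist p (σ p k)) := by
  refine ⟨0, ?_⟩
  rintro _ ⟨p, rfl⟩
  exact dist_nonneg

lemma transLen_le (σ : T → G → T) (k : G) (p : T) :
    transLen σ k ≤ dist p (σ p k) := ciInf_le (transLen_bdd σ k) p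

lemma transLen_nonneg [Nonempty T] (σ : T → G → T) (k : G) :
    0 ≤ transLen σ k := le_ciInf fun _ => dist_nonneg

lemma transLen_eq_of [Nonempty T] (σ : T → G → T) (k : G) {p : T} {c : ℝ}
    (hp : dist p (σ p k) = c) (h : ∀ z, c ≤ dist z (σ z k)) :
    transLen σ k = c :=
  le_antisymm (hp ▸ transLen_le σ k p) (le_ciInf h)

lemma disp_inv (hσ : IsIsomRightAction σ) (k : G) (z : T) :
    dist z (σ z k⁻¹) = dist z (σ z k) := by
  rw [dist_act_right hσ, inv_inv, dist_comm]

lemma transLen_inv (hσ : IsIsomRightAction σ) (k : G) :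
    transLen σ k⁻¹ = transLen σ k := by
  unfold transLen
  exact congrArg _ (funext fun z => disp_inv hσ k z)

lemma charSet_inv (hσ : IsIsomRightAction σ) (k : G) :
    charSet σ k⁻¹ = charSet σ k := by
  ext p
  simp only [charSet, Set.mem_setOf_eq, disp_inv hσ, transLen_inv hσ]

lemma mem_charSet_act (hσ : IsIsomRightAction σ) {k : G} {u : T}
    (hu : u ∈ charSet σ k) : σ u k ∈ charSet σ k := by
  have : dist (σ u k) (σ (σ u k) k) = dist u (σ u k) := by
    rw [dist_act_left hσ, act_inv_cancel hσ, dist_comm]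
  simpa only [charSet, Set.mem_setOf_eq, this] using hu

lemma mem_charSet_act_inv (hσ : IsIsomRightAction σ) {k : G} {u : T}
    (hu : u ∈ charSet σ k) : σ u k⁻¹ ∈ charSet σ k := by
  have : dist (σ u k⁻¹) (σ (σ u k⁻¹) k) = dist u (σ u k) := by
    rw [act_inv_cancel' hσ, dist_comm, disp_inv hσ]
  simpa only [charSet, Set.mem_setOf_eq, this] using hu

end ActionLemmas
section Semisimple

variable {G : Type*} [Group G] {T : Type*} [MetricSpace T] {σ : T → G → T}

/-- Hyperbolicity criterion: if `d(p, p·k²) = 2 d(p, p·k)` then `p` realizes the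
translation length of `k`. -/
lemma crit [Nonempty T] (h4 : FourPt T) (hσ : IsIsomRightAction σ) (k : G) (p : T)
    (h2 : dist p (σ p (k * k)) = 2 * dist p (σ p k)) :
    transLen σ k = dist p (σ p k) := by
  set p1 := σ p k with hp1
  set p2 := σ p (k * k) with hp2
  have hp12 : p2 = σ p1 k := by rw [hp2, hp1, act_mul hσ]
  set L := dist p p1 with hL
  have dL1 : dist p1 p2 = L := by rw [hp12, hp1, act_dist hσ, hL]
  refine transLen_eq_of σ k (p := p) (by rw [← hp1]) ?_
  intro z
  rcases le_or_gt L 0 with hL0 | hL0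
  · linarith [dist_nonneg (x := z) (y := σ z k)]
  set z1 := σ z k with hz1
  have e1 : dist z1 p1 = dist z p := by rw [hz1, hp1, act_dist hσ]
  have e2 : dist z1 p2 = dist z p1 := by rw [hz1, hp12, act_dist hσ]
  have H1 := h4 p p2 z p1
  have c1 : dist p p2 = 2 * L := h2
  have c2 : dist p2 p1 = L := by rw [dist_comm]; exact dL1
  have c3 : dist p z = dist z p := dist_comm _ _
  have c4 : dist p2 z = dist z p2 := dist_comm _ _
  rcases le_max_iff.mp H1 with hA | hB
  · have t : dist z1 p1 ≤ dist z1 z + dist z p1 := dist_triangle _ _ _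
    have c5 : dist z1 z = dist z z1 := dist_comm _ _
    linarith
  · have H2 := h4 p p2 z1 p1
    have c6 : dist p z1 = dist z1 p := dist_comm _ _
    have c7 : dist p2 z1 = dist z1 p2 := dist_comm _ _
    rcases le_max_iff.mp H2 with hB2 | hB1
    · have Hf := h4 z p2 z1 p
      have c8 : dist p2 p = dist p p2 := dist_comm _ _
      have t : dist p p1 ≤ dist p z + dist z p1 := dist_triangle _ _ _
      rcases le_max_iff.mp Hf with hf | hf
      · linarith
      · linarith
    · have t : dist z p1 ≤ dist z z1 + dist z1 p1 := dist_triangle _ _ _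
      linarith

/-- Main construction: the midpoint of `[z, z·k]` lies in `C_k`, and the translation
length is computable from `d(z,z·k)` and `d(z,z·k²)`. -/
lemma construction [Nonempty T] (h4 : FourPt T) (hg : Geod T)
    (hσ : IsIsomRightAction σ) (k : G) (z : T) :
    ∃ m ∈ charSet σ k, 2 * dist z m = dist z (σ z k) ∧
      (dist z (σ z (k * k)) ≤ dist z (σ z k) → transLen σ k = 0) ∧
      (dist z (σ z k) ≤ dist z (σ z (k * k)) →
        transLen σ k = dist z (σ z (k * k)) - dist z (σ z k)) := by
  set z1 := σ z k with hz1
  set z2 := σ z (k * k) with hz2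
  have hz12 : z2 = σ z1 k := by rw [hz2, hz1, act_mul hσ]
  set D := dist z z1 with hD
  set E := dist z z2 with hE
  have dE1 : dist z1 z2 = D := by rw [hz12, hz1, act_dist hσ, hD]
  obtain ⟨m, hm1, hm2⟩ := point_at hg z z1 (D / 2)
    (by positivity) (by rw [hD]; linarith [dist_nonneg (x := z) (y := z1)])
  rw [← hD] at hm2
  set m1 := σ m k with hm1d
  have hm1' : dist z1 m1 = dist z m := by rw [hm1d, hz1, act_dist hσ]
  have hm2' : dist m1 z2 = dist m z1 := by rw [hm1d, hz12, act_dist hσ]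
  obtain ⟨mq, hq1, hq2, hq3⟩ := median_exists h4 hg z z1 z2
  rw [dE1, ← hD, ← hE] at hq1 hq2 hq3
  have bq1 : dist z mq + dist mq z1 = D := by
    have : dist mq z1 = dist z1 mq := dist_comm _ _
    linarith
  have bq2 : dist z1 mq + dist mq z2 = dist z1 z2 := by
    have : dist mq z2 = dist z2 mq := dist_comm _ _
    rw [dE1]; linarith
  have bm1 : dist z m + dist m z1 = D := by rw [hm1, hm2]; ring
  have bm2 : dist z1 m1 + dist m1 z2 = dist z1 z2 := by
    rw [dE1, hm1', hm2', hm1, hm2]; ring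
  by_cases hED : E ≤ D
  · -- elliptic case: midpoint is fixed
    have d1 : dist mq m = dist z m - dist z mq := by
      apply between_dist h4 bq1 bm1
      rw [hm1]; linarith
    have d2 : dist m1 mq = dist z1 mq - dist z1 m1 := by
      apply between_dist h4 bm2 bq2
      rw [hm1', hm1]; linarith
    have H := h4 z1 mq m m1
    have c1 : dist z1 m = dist m z1 := dist_comm _ _
    have c2 : dist mq m1 = dist m1 mq := dist_comm _ _
    have hm0 : dist m m1 ≤ 0 := by
      rcases le_max_iff.mp H with h | h <;> linarith
    have hmm : dist m (σ m k) = 0 :=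
      le_antisymm (by rw [← hm1d]; exact hm0) dist_nonneg
    have hℓ : transLen σ k = 0 :=
      transLen_eq_of σ k hmm (fun _ => dist_nonneg)
    refine ⟨m, ?_, by rw [hm1]; ring, fun _ => hℓ, fun hDE => ?_⟩
    · show dist m (σ m k) = transLen σ k
      rw [hmm, hℓ]
    · have hEq : E = D := le_antisymm hED hDE
      rw [hℓ, hEq]; ring
  · push_neg at hED
    -- hyperbolic case
    have d1 : dist m mq = dist z mq - dist z m := by
      apply between_dist h4 bm1 bq1
      rw [hm1]; linarith
    have d2 : dist mq m1 = dist z1 m1 - dist z1 mq := by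
      apply between_dist h4 bq2 bm2
      rw [hm1', hm1]; linarith
    have low : E ≤ dist z m + dist m m1 + dist m1 z2 := by
      calc E ≤ dist z m + dist m z2 := dist_triangle _ _ _
      _ ≤ dist z m + (dist m m1 + dist m1 z2) := by
            linarith [dist_triangle m m1 z2]
      _ = _ := by ring
    have up : dist m m1 ≤ dist m mq + dist mq m1 := dist_triangle _ _ _
    have hmm1 : dist m m1 = E - D := by linarith
    have dmz2 : dist m z2 = E - D / 2 := by
      have lo : E ≤ dist z m + dist m z2 := dist_triangle _ _ _
      have hi : dist m z2 ≤ dist m mq + dist mq z2 := dist_triangle _ _ _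
      have c : dist mq z2 = dist z2 mq := dist_comm _ _
      linarith
    set m2 := σ m1 k with hm2d
    have dm1m2 : dist m1 m2 = E - D := by
      rw [hm2d, hm1d, act_dist hσ, ← hm1d, hmm1]
    have dz2m2 : dist z2 m2 = dist z1 m1 := by
      rw [hm2d, hz12, act_dist hσ]
    have H := h4 m z2 m2 m1
    have c1 : dist m2 m1 = dist m1 m2 := dist_comm _ _
    have c2 : dist z2 m1 = dist m1 z2 := dist_comm _ _
    have hm2low : 2 * (E - D) ≤ dist m m2 := by
      rcases le_max_iff.mp H with h | h <;> linarith
    have hm2up : dist m m2 ≤ 2 * (E - D) := by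
      calc dist m m2 ≤ dist m m1 + dist m1 m2 := dist_triangle _ _ _
      _ = 2 * (E - D) := by rw [hmm1, dm1m2]; ring
    have hcrit : dist m (σ m (k * k)) = 2 * dist m (σ m k) := by
      have e : σ m (k * k) = m2 := by rw [hm2d, hm1d, act_mul hσ]
      rw [e, ← hm1d, hmm1]
      exact le_antisymm hm2up hm2low
    have hℓ := crit h4 hσ k m hcrit
    refine ⟨m, ?_, by rw [hm1]; ring, fun hcon => absurd hcon (not_le.mpr hED),
      fun _ => ?_⟩
    · show dist m (σ m k) = transLen σ k
      rw [hℓ]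
    · rw [hℓ, ← hm1d, hmm1]

/-- Characteristic sets are nonempty. -/
lemma charSet_nonempty [Nonempty T] (h4 : FourPt T) (hg : Geod T)
    (hσ : IsIsomRightAction σ) (k : G) : ∃ m, m ∈ charSet σ k := by
  obtain ⟨z⟩ := (inferInstance : Nonempty T)
  obtain ⟨m, hm, -⟩ := construction h4 hg hσ k z
  exact ⟨m, hm⟩

/-- Every point admits a gate (nearest-point projection) to `C_k`. -/
lemma exists_gate [Nonempty T] (h4 : FourPt T) (hg : Geod T)
    (hσ : IsIsomRightAction σ) (k : G) (z : T) :
    ∃ w ∈ charSet σ k,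
      ∀ u ∈ charSet σ k, dist z u = dist z w + dist w u := by
  have main : ∃ w, w ∈ charSet σ k ∧
      2 * dist z w = dist z (σ z k) - transLen σ k := by
    set z1 := σ z k with hz1
    set z2 := σ z (k * k) with hz2
    have hz12 : z2 = σ z1 k := by rw [hz2, hz1, act_mul hσ]
    set D := dist z z1 with hD
    set E := dist z z2 with hE
    have dE1 : dist z1 z2 = D := by rw [hz12, hz1, act_dist hσ, hD]
    have hE2D : E ≤ 2 * D := by
      have := dist_triangle z z1 z2
      rw [dE1] at this
      rw [hE]; rw [hD] at this ⊢; linarith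
    obtain ⟨m, hmC, hm, hell, hhyp⟩ := construction h4 hg hσ k z
    rw [← hz1] at hm
    rw [← hz1, ← hz2, ← hD, ← hE] at hell hhyp
    by_cases hED : E ≤ D
    · have hℓ0 : transLen σ k = 0 := hell hED
      exact ⟨m, hmC, by rw [hℓ0]; linarith⟩
    · push_neg at hED
      have hℓE : transLen σ k = E - D := hhyp (le_of_lt hED)
      obtain ⟨w, hw1, hw2⟩ := point_at hg z z1 (D - E / 2)
        (by linarith) (by rw [hD]; linarith [dist_nonneg (x := z) (y := z2)])
      rw [← hD] at hw2
      set w1 := σ w k with hw1d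
      have hww : dist z1 w1 = dist z w := by rw [hw1d, hz1, act_dist hσ]
      have hww2 : dist w1 z2 = dist w z1 := by rw [hw1d, hz12, act_dist hσ]
      obtain ⟨mq, hq1, hq2, hq3⟩ := median_exists h4 hg z z1 z2
      rw [dE1, ← hD, ← hE] at hq1 hq2 hq3
      have bq1 : dist z mq + dist mq z1 = D := by
        have : dist mq z1 = dist z1 mq := dist_comm _ _
        linarith
      have bq2 : dist z1 mq + dist mq z2 = dist z1 z2 := by
        have : dist mq z2 = dist z2 mq := dist_comm _ _
        rw [dE1]; linarith
      have bw1 : dist z w + dist w z1 = D := by rw [hw1, hw2]; ring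
      have bw2 : dist z1 w1 + dist w1 z2 = dist z1 z2 := by
        rw [dE1, hww, hww2, hw1, hw2]; ring
      have hwmq : w1 = mq := by
        apply seg_unique h4 bw2 bq2
        rw [hww, hw1]; linarith
      have dwmq : dist w mq = dist z mq - dist z w := by
        apply between_dist h4 bw1 bq1
        rw [hw1]; linarith
      have hwC : w ∈ charSet σ k := by
        show dist w (σ w k) = transLen σ k
        rw [← hw1d, hwmq, dwmq, hw1, hℓE]
        linarith
      exact ⟨w, hwC, by rw [hw1, hℓE]; ring⟩
  obtain ⟨w, hwC, hw⟩ := main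
  refine ⟨w, hwC, ?_⟩
  have min_prop : ∀ u ∈ charSet σ k, dist z w ≤ dist z u := by
    intro u hu
    have huk : dist u (σ u k) = transLen σ k := hu
    have t1 : dist z (σ z k) ≤ dist z u + dist u (σ z k) := dist_triangle _ _ _
    have t2 : dist u (σ z k) ≤ dist u (σ u k) + dist (σ u k) (σ z k) :=
      dist_triangle _ _ _
    have t3 : dist (σ u k) (σ z k) = dist u z := act_dist hσ k u z
    have c : dist u z = dist z u := dist_comm _ _
    linarith
  have convex : ∀ u ∈ charSet σ k, ∀ u' ∈ charSet σ k, ∀ v : T,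
      dist u v + dist v u' = dist u u' → v ∈ charSet σ k := by
    intro u hu u' hu' v hv
    have H := h4 v (σ v k) u u'
    have b1 : dist (σ v k) u' ≤ dist v u' + transLen σ k := by
      have t : dist (σ v k) u' ≤ dist (σ v k) (σ u' k) + dist (σ u' k) u' :=
        dist_triangle _ _ _
      have e : dist (σ v k) (σ u' k) = dist v u' := act_dist hσ k v u'
      have e2 : dist (σ u' k) u' = transLen σ k := by rw [dist_comm]; exact hu'
      linarith
    have b2 : dist (σ v k) u ≤ dist v u + transLen σ k := by
      have t : dist (σ v k) u ≤ dist (σ v k) (σ u k) + dist (σ u k) u :=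
        dist_triangle _ _ _
      have e : dist (σ v k) (σ u k) = dist v u := act_dist hσ k v u
      have e2 : dist (σ u k) u = transLen σ k := by rw [dist_comm]; exact hu
      linarith
    have c1 : dist v u = dist u v := dist_comm _ _
    have hvk : dist v (σ v k) ≤ transLen σ k := by
      rcases le_max_iff.mp H with h | h <;> linarith
    exact le_antisymm hvk (transLen_le σ k v)
  intro u hu
  obtain ⟨v, hv1, hv2, hv3⟩ := median_exists h4 hg z w u
  have bvw : dist w v + dist v u = dist w u := by
    have c1 : dist v u = dist u v := dist_comm _ _
    linarith
  have hvC : v ∈ charSet σ k := convex w hwC u hu v bvw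
  have hge := min_prop v hvC
  have bzv : dist z v + dist v w = dist z w := by
    have c : dist v w = dist w v := dist_comm _ _
    linarith
  have hvw0 : dist v w = 0 := by
    linarith [dist_nonneg (x := v) (y := w)]
  have hvw : v = w := dist_eq_zero.mp hvw0
  have bzu : dist z v + dist v u = dist z u := by
    have c1 : dist v u = dist u v := dist_comm _ _
    linarith
  rw [← hvw]
  linarith

end Semisimple
section Bridge

variable {G : Type*} [Group G] {T : Type*} [MetricSpace T] {σ : T → G → T}

/-- Crossing lemma: a point hanging behind `b` sees `C₁` through `a`. -/
lemma bridge_cross (h4 : FourPt T) (hσ : IsIsomRightAction σ) {k₁ k₂ : G} {a b : T}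
    (hb : b ∈ charSet σ k₂) (hab : 0 < dist a b)
    (sep : ∀ u ∈ charSet σ k₁, ∀ v ∈ charSet σ k₂,
      dist u v = dist u a + dist a b + dist b v)
    (x : T) (hx : dist x a = dist x b + dist a b) :
    ∀ u ∈ charSet σ k₁, dist x u = dist x a + dist a u := by
  intro u hu
  have hub : dist u b = dist u a + dist a b := by
    have := sep u hu b hb
    rw [dist_self] at this
    linarith
  have H := h4 x a b u
  have c1 : dist b u = dist u b := dist_comm _ _
  have c2 : dist a u = dist u a := dist_comm _ _
  have up : dist x u ≤ dist x a + dist a u := dist_triangle _ _ _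
  rcases le_max_iff.mp H with h | h
  · linarith
  · linarith

/-- A point whose gate on `C₁` is distinct from `a` hangs behind `a`. -/
lemma bridge_gate_shift (h4 : FourPt T) (hσ : IsIsomRightAction σ) {k₁ k₂ : G}
    {a b : T} (ha : a ∈ charSet σ k₁) (hb : b ∈ charSet σ k₂)
    (sep : ∀ u ∈ charSet σ k₁, ∀ v ∈ charSet σ k₂,
      dist u v = dist u a + dist a b + dist b v)
    (x w : T) (hw : w ∈ charSet σ k₁) (hwa : w ≠ a)
    (hgw : ∀ u ∈ charSet σ k₁, dist x u = dist x w + dist w u) :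
    dist x b = dist x a + dist a b := by
  have dwb : dist w b = dist w a + dist a b := by
    have := sep w hw b hb
    rw [dist_self] at this
    linarith
  have dxa : dist x a = dist x w + dist w a := hgw a ha
  have H := h4 x a b w
  have c1 : dist b w = dist w b := dist_comm _ _
  have c2 : dist a w = dist w a := dist_comm _ _
  have dpos : 0 < dist w a := dist_pos.mpr hwa
  have up : dist x b ≤ dist x w + dist w b := dist_triangle _ _ _
  rcases le_max_iff.mp H with h | h
  · linarith
  · linarith

/-- Elliptic crossing: applying `k₁` with `ℓ(k₁) = 0` to a point hanging behind `b`
produces a point hanging behind `a`. -/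
lemma bridge_ell (h4 : FourPt T) (hg : Geod T) (hσ : IsIsomRightAction σ)
    {k₁ k₂ : G} {a b : T} (ha : a ∈ charSet σ k₁) (hb : b ∈ charSet σ k₂)
    (sep : ∀ u ∈ charSet σ k₁, ∀ v ∈ charSet σ k₂,
      dist u v = dist u a + dist a b + dist b v)
    (hk : transLen σ k₁ = 0) (x : T)
    (hx : dist x a = dist x b + dist a b) :
    dist (σ x k₁) b = dist (σ x k₁) a + dist a b := by
  have haC : dist a (σ a k₁) = transLen σ k₁ := ha
  have hfix : σ a k₁ = a := (dist_eq_zero.mp (haC.trans hk)).symm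
  have hfix' : σ a k₁⁻¹ = a := by
    conv_lhs => rw [← hfix]
    exact act_inv_cancel hσ a k₁
  set x' := σ x k₁ with hx'
  have hxa' : dist x' a = dist x a := by
    rw [hx', dist_act_left hσ, hfix']
  obtain ⟨y, hy1, hy2, hy3⟩ := median_exists h4 hg a x' b
  have bay_b : dist a y + dist y b = dist a b := by
    have c1 : dist y b = dist b y := dist_comm _ _
    linarith
  have bay_x : dist a y + dist y x' = dist a x' := by
    have c1 : dist y x' = dist x' y := dist_comm _ _
    linarith
  have hy'a : dist a (σ y k₁⁻¹) = dist a y := by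
    rw [dist_act_right hσ, inv_inv, hfix]
  have hy'x : dist (σ y k₁⁻¹) x = dist y x' := by
    rw [hx', ← act_dist hσ k₁ (σ y k₁⁻¹) x, act_inv_cancel' hσ]
  have hbax : dist a b + dist b x = dist a x := by
    have c1 : dist x a = dist a x := dist_comm _ _
    have c2 : dist x b = dist b x := dist_comm _ _
    linarith
  have hyax : dist a y + dist y x = dist a x := between_trans bay_b hbax
  have hy'ax : dist a (σ y k₁⁻¹) + dist (σ y k₁⁻¹) x = dist a x := by
    rw [hy'a, hy'x]
    have c1 : dist x' a = dist a x' := dist_comm _ _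
    have c2 : dist x a = dist a x := dist_comm _ _
    linarith
  have heq : y = σ y k₁⁻¹ := seg_unique h4 hyax hy'ax hy'a.symm
  have hyfix : σ y k₁ = y := by
    conv_lhs => rw [heq]
    exact act_inv_cancel' hσ y k₁
  have hyC : y ∈ charSet σ k₁ := by
    show dist y (σ y k₁) = transLen σ k₁
    rw [hyfix, dist_self, hk]
  have hsep := sep y hyC b hb
  rw [dist_self] at hsep
  have c1 : dist y a = dist a y := dist_comm _ _
  have c2 : dist a x' = dist x' a := dist_comm _ _
  have hay0 : dist a y = 0 := by linarith
  linarith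

/-- The main propagation step. -/
lemma bridge_step (h4 : FourPt T) (hg : Geod T) (hσ : IsIsomRightAction σ)
    [Nonempty T] {k₁ k₂ : G} {a b : T}
    (ha : a ∈ charSet σ k₁) (hb : b ∈ charSet σ k₂) (hab : 0 < dist a b)
    (sep : ∀ u ∈ charSet σ k₁, ∀ v ∈ charSet σ k₂,
      dist u v = dist u a + dist a b + dist b v)
    (x : T) (hx : dist x a = dist x b + dist a b) :
    dist (σ x k₁) b = dist (σ x k₁) a + dist a b ∧
      dist (σ x k₁) a = dist x a + transLen σ k₁ := by
  have hcross := bridge_cross h4 hσ hb hab sep x hx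
  have gate' : ∀ u ∈ charSet σ k₁,
      dist (σ x k₁) u = dist x a + dist (σ a k₁) u := by
    intro u hu
    have h1 : dist (σ x k₁) u = dist x (σ u k₁⁻¹) := dist_act_left hσ k₁ x u
    have h2 : σ u k₁⁻¹ ∈ charSet σ k₁ := mem_charSet_act_inv hσ hu
    have h3 : dist a (σ u k₁⁻¹) = dist (σ a k₁) u := by
      rw [dist_act_right hσ, inv_inv]
    rw [h1, hcross _ h2, h3]
  have second : dist (σ x k₁) a = dist x a + transLen σ k₁ := by
    rw [gate' a ha, dist_comm (σ a k₁) a]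
    have haC : dist a (σ a k₁) = transLen σ k₁ := ha
    rw [haC]
  refine ⟨?_, second⟩
  rcases eq_or_lt_of_le (transLen_nonneg σ k₁) with hk | hk
  · exact bridge_ell h4 hg hσ ha hb sep hk.symm x hx
  · have hne : σ a k₁ ≠ a := by
      intro hcon
      have : dist a (σ a k₁) = 0 := by rw [hcon, dist_self]
      have haC : dist a (σ a k₁) = transLen σ k₁ := ha
      rw [haC] at this
      linarith
    have hwC : σ a k₁ ∈ charSet σ k₁ := mem_charSet_act hσ ha
    have hg2 : ∀ u ∈ charSet σ k₁,
        dist (σ x k₁) u = dist (σ x k₁) (σ a k₁) + dist (σ a k₁) u := by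
      intro u hu
      rw [gate' u hu, gate' (σ a k₁) hwC, dist_self, add_zero]
    exact bridge_gate_shift h4 hσ ha hb sep (σ x k₁) (σ a k₁) hwC hne hg2

/-- Translation length of the product across a bridge. -/
lemma bridge_formula (h4 : FourPt T) (hg : Geod T) (hσ : IsIsomRightAction σ)
    [Nonempty T] {k₁ k₂ : G} {a b : T}
    (ha : a ∈ charSet σ k₁) (hb : b ∈ charSet σ k₂) (hab : 0 < dist a b)
    (sep : ∀ u ∈ charSet σ k₁, ∀ v ∈ charSet σ k₂,
      dist u v = dist u a + dist a b + dist b v) :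
    transLen σ (k₁ * k₂) = transLen σ k₁ + transLen σ k₂ + 2 * dist a b := by
  have hab' : 0 < dist b a := by rw [dist_comm]; exact hab
  have sep' : ∀ v ∈ charSet σ k₂, ∀ u ∈ charSet σ k₁,
      dist v u = dist v b + dist b a + dist a u := by
    intro v hv u hu
    have h := sep u hu v hv
    have c1 : dist v u = dist u v := dist_comm _ _
    have c2 : dist v b = dist b v := dist_comm _ _
    have c3 : dist b a = dist a b := dist_comm _ _
    have c4 : dist a u = dist u a := dist_comm _ _
    linarith
  set x1 := σ b k₁ with hx1
  set x2 := σ x1 k₂ with hx2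
  set x3 := σ x2 k₁ with hx3
  set x4 := σ x3 k₂ with hx4
  have hx0 : dist b a = dist b b + dist a b := by
    rw [dist_self, zero_add, dist_comm]
  obtain ⟨s1a, s1b⟩ := bridge_step h4 hg hσ ha hb hab sep b hx0
  rw [← hx1] at s1a s1b
  obtain ⟨s2a, s2b⟩ := bridge_step h4 hg hσ hb ha hab' sep' x1
    (by rw [dist_comm a b] at s1a; exact s1a)
  rw [← hx2] at s2a s2b
  obtain ⟨s3a, s3b⟩ := bridge_step h4 hg hσ ha hb hab sep x2
    (by rw [dist_comm b a] at s2a; exact s2a)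
  rw [← hx3] at s3a s3b
  obtain ⟨s4a, s4b⟩ := bridge_step h4 hg hσ hb ha hab' sep' x3
    (by rw [dist_comm a b] at s3a; exact s3a)
  rw [← hx4] at s4a s4b
  -- collect distance values
  set la := transLen σ k₁
  set lb := transLen σ k₂
  set d := dist a b with hd
  have cba : dist b a = d := by rw [hd, dist_comm]
  have v1a : dist x1 a = d + la := by rw [s1b, cba]
  have v1b : dist x1 b = 2 * d + la := by rw [s1a, v1a, hd]; ring
  have v2b : dist x2 b = 2 * d + la + lb := by rw [s2b, v1b]
  have v2a : dist x2 a = 3 * d + la + lb := by rw [s2a, v2b, cba]; ring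
  have v3a : dist x3 a = 3 * d + 2 * la + lb := by rw [s3b, v2a]; ring
  have v3b : dist x3 b = 4 * d + 2 * la + lb := by rw [s3a, v3a, hd]; ring
  have v4b : dist x4 b = 4 * d + 2 * la + 2 * lb := by rw [s4b, v3b]; ring
  have e2 : σ b (k₁ * k₂) = x2 := by
    rw [hx2, hx1, act_mul hσ]
  have e4 : σ b ((k₁ * k₂) * (k₁ * k₂)) = x4 := by
    rw [hx4, hx3, act_mul hσ, ← e2, act_mul hσ]
  have hcrit : dist b (σ b ((k₁ * k₂) * (k₁ * k₂))) =
      2 * dist b (σ b (k₁ * k₂)) := by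
    rw [e2, e4, dist_comm b x4, dist_comm b x2, v4b, v2b]
    ring
  have := crit h4 hσ (k₁ * k₂) b hcrit
  rw [this, e2, dist_comm b x2, v2b]
  ring

/-- Disjoint characteristic sets admit a bridge. -/
lemma exists_bridge (h4 : FourPt T) (hg : Geod T) (hσ : IsIsomRightAction σ)
    [Nonempty T] (g h : G) (hdisj : charSet σ g ∩ charSet σ h = ∅) :
    ∃ p q : T, p ∈ charSet σ g ∧ q ∈ charSet σ h ∧ 0 < dist p q ∧
      ∀ u ∈ charSet σ g, ∀ v ∈ charSet σ h,
        dist u v = dist u p + dist p q + dist q v := by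
  obtain ⟨p₀, hp₀⟩ := charSet_nonempty h4 hg hσ g
  obtain ⟨q, hqC, hq_gate⟩ := exists_gate h4 hg hσ h p₀
  obtain ⟨p, hpC, hp_gate⟩ := exists_gate h4 hg hσ g q
  obtain ⟨q', hq'C, hq'_gate⟩ := exists_gate h4 hg hσ h p
  have hqq' : q' = q := by
    have h1 : dist p₀ q' = dist p₀ q + dist q q' := hq_gate q' hq'C
    have h2 : dist p q = dist p q' + dist q' q := hq'_gate q hqC
    have h3 : dist q p₀ = dist q p + dist p p₀ := hp_gate p₀ hp₀
    have h4' : dist p₀ q' ≤ dist p₀ p + dist p q' := dist_triangle _ _ _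
    have c1 : dist p₀ q = dist q p₀ := dist_comm _ _
    have c2 : dist p₀ p = dist p p₀ := dist_comm _ _
    have c3 : dist q p = dist p q := dist_comm _ _
    have c4 : dist q' q = dist q q' := dist_comm _ _
    have : dist q' q ≤ 0 := by linarith
    exact dist_eq_zero.mp (le_antisymm this dist_nonneg)
  subst hqq'
  have hΔ : 0 < dist p q' := by
    rcases eq_or_lt_of_le (dist_nonneg (x := p) (y := q')) with h0 | h0
    · exfalso
      have hpq : p = q' := dist_eq_zero.mp h0.symm
      have : p ∈ charSet σ g ∩ charSet σ h := ⟨hpC, hpq ▸ hq'C⟩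
      rw [hdisj] at this
      exact this
    · exact h0
  refine ⟨p, q', hpC, hq'C, hΔ, ?_⟩
  intro u hu v hv
  have g1 : dist q' u = dist q' p + dist p u := hp_gate u hu
  have g2 : dist p v = dist p q' + dist q' v := hq'_gate v hv
  have up : dist u v ≤ dist u p + dist p q' + dist q' v := by
    have t1 : dist u v ≤ dist u p + dist p v := dist_triangle _ _ _
    linarith
  have H := h4 q' u v p
  have c1 : dist q' p = dist p q' := dist_comm _ _
  have c2 : dist v p = dist p v := dist_comm _ _
  have c3 : dist q' v = dist q' v := rfl
  have c4 : dist u p = dist p u := dist_comm _ _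
  have c5 : dist q' u = dist u q' := dist_comm _ _
  rcases le_max_iff.mp H with hcase | hcase
  · linarith
  · linarith

end Bridge

/-- in a `G`-tree, for distinct `g, h`, the characteristic sets
`C_g` and `C_h` are disjoint iff `ℓ(gh) = ℓ(gh⁻¹) > ℓ(g) + ℓ(h)`. -/
theorem disjoint_charSet_iff {G : Type*} [Group G] {T : Type*} [MetricSpace T]
    (σ : T → G → T) (hT : IsRealTree T) (hσ : IsIsomRightAction σ) :
    ∀ g h : G, g ≠ h →
      (charSet σ g ∩ charSet σ h = ∅ ↔
        transLen σ (g * h) = transLen σ (g * h⁻¹) ∧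
        transLen σ g + transLen σ h < transLen σ (g * h)) := by
  intro g h _
  haveI : Nonempty T := hT.1
  have h4 : FourPt T := hT.2.2.2
  have hg : Geod T := hT.2.2.1
  constructor
  · -- forward: disjoint characteristic sets
    intro hdisj
    obtain ⟨p, q, hp, hq, hΔ, sep⟩ := exists_bridge h4 hg hσ g h hdisj
    have f1 : transLen σ (g * h) =
        transLen σ g + transLen σ h + 2 * dist p q :=
      bridge_formula h4 hg hσ hp hq hΔ sep
    have hq' : q ∈ charSet σ h⁻¹ := by
      rw [charSet_inv hσ]; exact hq
    have sep' : ∀ u ∈ charSet σ g, ∀ v ∈ charSet σ h⁻¹,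
        dist u v = dist u p + dist p q + dist q v := by
      intro u hu v hv
      rw [charSet_inv hσ] at hv
      exact sep u hu v hv
    have f2 : transLen σ (g * h⁻¹) =
        transLen σ g + transLen σ h⁻¹ + 2 * dist p q :=
      bridge_formula h4 hg hσ hp hq' hΔ sep'
    rw [transLen_inv hσ] at f2
    constructor
    · rw [f1, f2]
    · rw [f1]; linarith
  · -- backward
    rintro ⟨heq, hlt⟩
    by_contra hne
    obtain ⟨z, hzg, hzh⟩ := Set.nonempty_iff_ne_empty.mpr hne
    have hzg' : dist z (σ z g) = transLen σ g := hzg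
    have hzh' : dist z (σ z h) = transLen σ h := hzh
    have e : σ z (g * h⁻¹) = σ (σ z g) h⁻¹ := hσ.2.1 z g h⁻¹
    have d : dist z (σ (σ z g) h⁻¹) = dist (σ z h) (σ z g) := by
      rw [dist_act_right hσ, inv_inv]
    have key : dist z (σ z (g * h⁻¹)) ≤ transLen σ g + transLen σ h := by
      rw [e, d]
      have t : dist (σ z h) (σ z g) ≤ dist (σ z h) z + dist z (σ z g) :=
        dist_triangle _ _ _
      have c : dist (σ z h) z = dist z (σ z h) := dist_comm _ _
      linarith
    have hle := transLen_le σ (g * h⁻¹) z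
    linarith
end
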